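/- arXiv:2401.00567 — 8 statements merged into one kernel-verified Lean document; each statement's English description precedes it below -/
import Mathlib

section
/- Let (X,Σ,μ) be a probability space, 0<r<1, and T the Koopman operator of a measure preserving transformation. If f ∈ L^r(μ) satisfies ∫|M_n f|^r dμ → 0, then f lies in the closure of (I-T)L^r(μ) in the metric d(u,v)=∫|u-v|^r dμ. -/
open MeasureTheory Filter Topology ENNReal Finset

/-! With `g = (1/n) ∑_{k<n} S_k f`, where `S_k f = ∑_{j<k} f ∘ θ^[j]` are the Birkhoff sums,
telescoping gives `g - g ∘ θ = f - M_n f`, so `d(f, (I - T) g) = ∫ |M_n f|^r`, which is small for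
large `n`. And `g ∈ L^r` because `L^r` is a vector space for every `r > 0` and `T` preserves it. -/

section AveragedBirkhoffSum

variable {α M : Type*}

def averagedBirkhoffSum (R : Type*) [DivisionRing R] [AddCommMonoid M] [Module R M]
    (θ : α → α) (f : α → M) (n : ℕ) (x : α) : M :=
  (n : R)⁻¹ • ∑ k ∈ range n, birkhoffSum θ f k x

theorem averagedBirkhoffSum_sub_averagedBirkhoffSum_apply (R : Type*) [DivisionRing R]
    [CharZero R] [AddCommGroup M] [Module R M] (θ : α → α) (f : α → M) {n : ℕ} (hn : n ≠ 0)
    (x : α) :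
    averagedBirkhoffSum R θ f n x - averagedBirkhoffSum R θ f n (θ x) =
      f x - birkhoffAverage R θ f n x := by
  have hsum : ∑ k ∈ range n, (birkhoffSum θ f k x - birkhoffSum θ f k (θ x)) =
      n • f x - birkhoffSum θ f n x := by
    calc ∑ k ∈ range n, (birkhoffSum θ f k x - birkhoffSum θ f k (θ x))
        = ∑ k ∈ range n, (f x - f (θ^[k] x)) := by
          refine sum_congr rfl fun k _ => ?_
          rw [← neg_sub, birkhoffSum_apply_sub_birkhoffSum, neg_sub]
      _ = n • f x - birkhoffSum θ f n x := by
          rw [sum_sub_distrib, sum_const, card_range, birkhoffSum]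
  rw [averagedBirkhoffSum, averagedBirkhoffSum, ← smul_sub, ← sum_sub_distrib, hsum,
    smul_sub, birkhoffAverage, ← Nat.cast_smul_eq_nsmul R, inv_smul_smul₀ (by exact_mod_cast hn)]

theorem Measurable.birkhoffSum [AddCommMonoid M] [MeasurableSpace α] [MeasurableSpace M]
    [MeasurableAdd₂ M] {θ : α → α} {f : α → M} (hf : Measurable f) (hθ : Measurable θ) (n : ℕ) :
    Measurable (birkhoffSum θ f n) :=
  Finset.measurable_sum _ fun k _ => hf.comp (hθ.iterate k)

theorem Measurable.averagedBirkhoffSum (R : Type*) [DivisionRing R] [AddCommMonoid M]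
    [Module R M] [MeasurableSpace α] [MeasurableSpace M] [MeasurableAdd₂ M]
    [MeasurableConstSMul R M] {θ : α → α} {f : α → M} (hf : Measurable f) (hθ : Measurable θ)
    (n : ℕ) : Measurable (averagedBirkhoffSum R θ f n) :=
  (Finset.measurable_sum _ fun k _ => hf.birkhoffSum hθ k).const_smul _

variable [MeasurableSpace α] {μ : Measure α} {θ : α → α}

theorem MeasureTheory.MemLp.birkhoffSum {E : Type*} [NormedAddCommGroup E] {f : α → E}
    {p : ℝ≥0∞} (hf : MemLp f p μ) (hθ : MeasurePreserving θ μ μ) (n : ℕ) :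
    MemLp (birkhoffSum θ f n) p μ :=
  memLp_finsetSum _ fun k _ => hf.comp_measurePreserving (hθ.iterate k)

theorem MeasureTheory.MemLp.averagedBirkhoffSum {E : Type*} [NormedAddCommGroup E]
    [NormedSpace ℝ E] {f : α → E} {p : ℝ≥0∞} (hf : MemLp f p μ) (hθ : MeasurePreserving θ μ μ)
    (n : ℕ) : MemLp (averagedBirkhoffSum ℝ θ f n) p μ :=
  (memLp_finsetSum _ fun k _ => hf.birkhoffSum hθ k).const_smul _

end AveragedBirkhoffSum

theorem MeasureTheory.memLp_ofReal_iff_lintegral_ofReal_abs_rpow_lt_top {α : Type*}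
    [MeasurableSpace α] {μ : Measure α} {f : α → ℝ} (hf : AEStronglyMeasurable f μ) {r : ℝ}
    (hr : 0 < r) :
    MemLp f (ENNReal.ofReal r) μ ↔ ∫⁻ x, ENNReal.ofReal (|f x| ^ r) ∂μ < ∞ := by
  rw [MemLp, eLpNorm_lt_top_iff_lintegral_rpow_enorm_lt_top (by simpa using hr) ofReal_ne_top,
    toReal_ofReal hr.le, and_iff_right hf]
  simp only [Real.enorm_eq_ofReal_abs, ofReal_rpow_of_nonneg (abs_nonneg _) hr.le]

theorem stmt2_general {X : Type*} [MeasurableSpace X] (μ : Measure X)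
    (θ : X → X) (hθ : MeasurePreserving θ μ μ) (r : ℝ) (hr0 : 0 < r)
    (f : X → ℝ) (hf : Measurable f)
    (hfLr : ∫⁻ x, ENNReal.ofReal (|f x| ^ r) ∂μ < ⊤)
    (hconv : Tendsto (fun n : ℕ =>
        ∫⁻ x, ENNReal.ofReal
          (|(1 / (n : ℝ)) * ∑ k ∈ Finset.range n, f (θ^[k] x)| ^ r) ∂μ)
      atTop (𝓝 0)) :
    ∀ ε : ℝ≥0∞, 0 < ε → ∃ g : X → ℝ, Measurable g ∧
      (∫⁻ x, ENNReal.ofReal (|g x| ^ r) ∂μ < ⊤) ∧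
      ∫⁻ x, ENNReal.ofReal (|f x - (g x - g (θ x))| ^ r) ∂μ < ε := by
  intro ε hε
  obtain ⟨n, hn_lt, hn⟩ := ((hconv.eventually_lt_const hε).and (eventually_ne_atTop 0)).exists
  have hg := hf.averagedBirkhoffSum ℝ hθ.measurable n
  have hfMemLp :=
    (memLp_ofReal_iff_lintegral_ofReal_abs_rpow_lt_top hf.aestronglyMeasurable hr0).2 hfLr
  refine ⟨averagedBirkhoffSum ℝ θ f n, hg,
    (memLp_ofReal_iff_lintegral_ofReal_abs_rpow_lt_top hg.aestronglyMeasurable hr0).1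
      (hfMemLp.averagedBirkhoffSum hθ n), ?_⟩
  simpa only [averagedBirkhoffSum_sub_averagedBirkhoffSum_apply ℝ θ f hn, _root_.sub_sub_cancel,
    birkhoffAverage, birkhoffSum, smul_eq_mul, one_div] using hn_lt

/-- If `f ∈ L^r(μ)`, `0 < r < 1`, and `∫ |M_n f|^r dμ → 0`, then `f` lies in
the closure of `(I - T) L^r(μ)` in the metric `d(u,v) = ∫ |u - v|^r dμ`. -/
theorem stmt2 {X : Type*} [MeasurableSpace X] (μ : Measure X) [IsProbabilityMeasure μ]
    (θ : X → X) (hθ : MeasurePreserving θ μ μ) (r : ℝ) (hr0 : 0 < r) (hr1 : r < 1)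
    (f : X → ℝ) (hf : Measurable f)
    (hfLr : ∫⁻ x, ENNReal.ofReal (|f x| ^ r) ∂μ < ⊤)
    (hconv : Tendsto (fun n : ℕ =>
        ∫⁻ x, ENNReal.ofReal
          (|(1 / (n : ℝ)) * ∑ k ∈ Finset.range n, f (θ^[k] x)| ^ r) ∂μ)
      atTop (𝓝 0)) :
    ∀ ε : ℝ≥0∞, 0 < ε → ∃ g : X → ℝ, Measurable g ∧
      (∫⁻ x, ENNReal.ofReal (|g x| ^ r) ∂μ < ⊤) ∧
      ∫⁻ x, ENNReal.ofReal (|f x - (g x - g (θ x))| ^ r) ∂μ < ε :=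
  stmt2_general μ θ hθ r hr0 f hf hfLr hconv
end

section
/- Fix 0<r<1 and 0<ε₀<1 with ε₀ > 1/2. Define inductively 1/ε_j = ⌊1/√(∏_{k=0}^{j-1} ε_k)⌋ + 1 for j ≥ 1. Then for all j ≥ 1: ε_j < 1 and ε_j² < ∏_{k=0}^{j-1} ε_k ≤ ε₀^j, and consequently, for 0<r<1/3, the series ∑_{j≥0} ε_j^{1-3r} converges. -/
open Finset

/-- For the inductively defined sequence `1/ε_j = ⌊1/√(∏_{k<j} ε_k)⌋ + 1`
starting from `1/2 < ε₀ < 1`, one has for all `j ≥ 1` that `ε_j < 1`,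
`ε_j² < ∏_{k<j} ε_k ≤ ε₀^j`, and hence `∑_j ε_j^{1-3r}` converges for `0 < r < 1/3`. -/
theorem stmt4 (ε : ℕ → ℝ) (hε0 : 1 / 2 < ε 0) (hε0' : ε 0 < 1)
    (hrec : ∀ j : ℕ, 1 ≤ j →
      (ε j)⁻¹ = (⌊(Real.sqrt (∏ k ∈ Finset.range j, ε k))⁻¹⌋₊ : ℝ) + 1) :
    (∀ j : ℕ, 1 ≤ j → ε j < 1 ∧
      (ε j) ^ 2 < ∏ k ∈ Finset.range j, ε k ∧
      ∏ k ∈ Finset.range j, ε k ≤ (ε 0) ^ j) ∧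
    (∀ r : ℝ, 0 < r → r < 1 / 3 → Summable (fun j : ℕ => ε j ^ (1 - 3 * r))) := by
  have hε0pos : 0 < ε 0 := by linarith
  set P : ℕ → ℝ := fun j => ∏ k ∈ Finset.range j, ε k with hPdef
  have key : ∀ j, 1 ≤ j → (0 < P j ∧ P j ≤ ε 0 ^ j) ∧
      (0 < ε j ∧ ε j ≤ 1/2 ∧ ε j ^ 2 < P j) := by
    intro j hj
    induction j with
    | zero => omega
    | succ n ih =>
      have hQ : 0 < P (n+1) ∧ P (n+1) ≤ ε 0 ^ (n+1) := by
        rcases Nat.eq_zero_or_pos n with h0 | hn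
        · subst h0
          refine ⟨?_, ?_⟩ <;> norm_num [hPdef] <;> linarith
        · obtain ⟨⟨hPpos, hPle⟩, hεpos, hεle, _⟩ := ih hn
          have hstep : P (n+1) = P n * ε n := by
            simp [hPdef, Finset.prod_range_succ]
          constructor
          · rw [hstep]; positivity
          · rw [hstep, pow_succ]
            exact mul_le_mul hPle (by linarith) hεpos.le (by positivity)
      refine ⟨hQ, ?_⟩
      obtain ⟨hPpos, hPle⟩ := hQ
      have hPlt1 : P (n+1) < 1 :=
        lt_of_le_of_lt hPle (pow_lt_one₀ hε0pos.le hε0' (Nat.succ_ne_zero n))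
      have hs : 0 < Real.sqrt (P (n+1)) := Real.sqrt_pos.mpr hPpos
      have hslt1 : Real.sqrt (P (n+1)) < 1 := by
        rw [show (1:ℝ) = Real.sqrt 1 by simp]
        exact Real.sqrt_lt_sqrt hPpos.le hPlt1
      have hinv : 1 < (Real.sqrt (P (n+1)))⁻¹ := (one_lt_inv₀ hs).mpr hslt1
      have hrecj := hrec (n+1) (by omega)
      rw [show (∏ k ∈ Finset.range (n+1), ε k) = P (n+1) from rfl] at hrecj
      have hm1 : 1 ≤ ⌊(Real.sqrt (P (n+1)))⁻¹⌋₊ := Nat.le_floor (by exact_mod_cast hinv.le)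
      have hεpos : 0 < ε (n+1) := inv_pos.mp (by rw [hrecj]; positivity)
      have hεinv2 : (2:ℝ) ≤ (ε (n+1))⁻¹ := by
        rw [hrecj]
        have : (1:ℝ) ≤ (⌊(Real.sqrt (P (n+1)))⁻¹⌋₊ : ℝ) := by exact_mod_cast hm1
        linarith
      have h1 : ε (n+1) * (ε (n+1))⁻¹ = 1 := mul_inv_cancel₀ hεpos.ne'
      have hεhalf : ε (n+1) ≤ 1/2 := by nlinarith
      have hlt : (Real.sqrt (P (n+1)))⁻¹ < (ε (n+1))⁻¹ := by
        rw [hrecj]; exact Nat.lt_floor_add_one _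
      have hεlt : ε (n+1) < Real.sqrt (P (n+1)) :=
        (inv_lt_inv₀ hs hεpos).mp hlt
      have hsq : ε (n+1) ^ 2 < P (n+1) := by
        calc ε (n+1) ^ 2 < Real.sqrt (P (n+1)) ^ 2 :=
              pow_lt_pow_left₀ hεlt hεpos.le two_ne_zero
          _ = P (n+1) := Real.sq_sqrt hPpos.le
      exact ⟨hεpos, hεhalf, hsq⟩
  have hεposall : ∀ j, 0 < ε j := by
    intro j
    rcases Nat.eq_zero_or_pos j with h | h
    · rw [h]; exact hε0pos
    · exact (key j h).2.1
  constructor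
  · intro j hj
    obtain ⟨⟨hPpos, hPle⟩, hεpos, hεhalf, hsq⟩ := key j hj
    exact ⟨by linarith, hsq, hPle⟩
  · intro r hr hr'
    set p : ℝ := 1 - 3*r with hp
    have hppos : 0 < p := by rw [hp]; linarith
    have hbound : ∀ j, ε j ≤ Real.sqrt (ε 0) ^ j := by
      intro j
      rcases Nat.eq_zero_or_pos j with h | h
      · rw [h]; simpa using hε0'.le
      · obtain ⟨⟨hPpos, hPle⟩, hεpos, hεhalf, hsq⟩ := key j h
        have hb2 : (Real.sqrt (ε 0) ^ j) ^ 2 = ε 0 ^ j := by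
          rw [← pow_mul, mul_comm, pow_mul, Real.sq_sqrt hε0pos.le]
        have hsq' : ε j ^ 2 ≤ (Real.sqrt (ε 0) ^ j) ^ 2 := by
          rw [hb2]; exact le_trans hsq.le hPle
        calc ε j = Real.sqrt (ε j ^ 2) := (Real.sqrt_sq hεpos.le).symm
          _ ≤ Real.sqrt ((Real.sqrt (ε 0) ^ j) ^ 2) := Real.sqrt_le_sqrt hsq'
          _ = Real.sqrt (ε 0) ^ j := Real.sqrt_sq (by positivity)
    have hslt1 : Real.sqrt (ε 0) < 1 := by
      rw [show (1:ℝ) = Real.sqrt 1 by simp]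
      exact Real.sqrt_lt_sqrt hε0pos.le hε0'
    have hc : Real.sqrt (ε 0) ^ p < 1 :=
      Real.rpow_lt_one (Real.sqrt_nonneg _) hslt1 hppos
    apply Summable.of_nonneg_of_le
      (fun j => Real.rpow_nonneg (hεposall j).le _)
      (fun j => ?_)
      (summable_geometric_of_lt_one (Real.rpow_nonneg (Real.sqrt_nonneg _) _) hc)
    calc ε j ^ p ≤ (Real.sqrt (ε 0) ^ j) ^ p :=
          Real.rpow_le_rpow (hεposall j).le (hbound j) hppos.le
      _ = (Real.sqrt (ε 0) ^ p) ^ j := by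
          rw [← Real.rpow_natCast (Real.sqrt (ε 0)) j,
            ← Real.rpow_natCast (Real.sqrt (ε 0) ^ p) j,
            ← Real.rpow_mul (Real.sqrt_nonneg _),
            ← Real.rpow_mul (Real.sqrt_nonneg _), mul_comm]
end

section
/- Let α, β be irrational numbers in [0,1) and let T, S be the Koopman operators on the circle (with Lebesgue probability measure) of the rotations by α and β respectively. Fix 0<r<1. Then the closure of (I-T)L^r in the L^r metric equals the closure of (I-S)L^r. -/
/-!
For `0 < r ≤ 1`, `D(u) = ∫ |u|^r` gives the translation-invariant metric `D(u - v)` on `L^r`,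
and translation is continuous in it (approximate by a continuous function, which is bounded on
the compact circle, and use dominated convergence). So if `g - g(· + α)` is `D`-close to `f`, so
is `g - g(· + n • β)` once `n • β` is close enough to `α`, and such `n` exist because the
multiples of an irrational `β` are dense in the circle. Finally `g - g(· + n • β)` is itself a
`β`-coboundary, of the telescoping sum `∑_{k<n} g(· + k • β)` (and symmetrically for `n < 0`).
-/

open MeasureTheory Filter Topology ENNReal

section LintegralAbsRpow

variable {α : Type*} [MeasurableSpace α]

noncomputable def lintegralAbsRpow (μ : Measure α) (r : ℝ) (u : α → ℝ) : ℝ≥0∞ :=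
  ∫⁻ x, ENNReal.ofReal (|u x| ^ r) ∂μ

variable {μ : Measure α} {r : ℝ}

lemma ofReal_abs_add_rpow_le (hr0 : 0 ≤ r) (hr1 : r ≤ 1) (a b : ℝ) :
    ENNReal.ofReal (|a + b| ^ r) ≤ ENNReal.ofReal (|a| ^ r) + ENNReal.ofReal (|b| ^ r) := by
  rw [← ENNReal.ofReal_add (by positivity) (by positivity)]
  refine ENNReal.ofReal_le_ofReal ?_
  calc |a + b| ^ r ≤ (|a| + |b|) ^ r := by gcongr; exact abs_add_le a b
    _ ≤ |a| ^ r + |b| ^ r :=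
      Real.rpow_add_le_add_rpow (abs_nonneg a) (abs_nonneg b) hr0 hr1

lemma lintegralAbsRpow_add_le (hr0 : 0 ≤ r) (hr1 : r ≤ 1) {u : α → ℝ} (hu : AEMeasurable u μ)
    (v : α → ℝ) : lintegralAbsRpow μ r (u + v) ≤ lintegralAbsRpow μ r u + lintegralAbsRpow μ r v :=
  calc lintegralAbsRpow μ r (u + v)
      ≤ ∫⁻ x, (ENNReal.ofReal (|u x| ^ r) + ENNReal.ofReal (|v x| ^ r)) ∂μ :=
        lintegral_mono fun x => ofReal_abs_add_rpow_le hr0 hr1 (u x) (v x)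
    _ = _ := lintegral_add_left' (hu.abs.pow_const r).ennreal_ofReal _

lemma lintegralAbsRpow_neg (u : α → ℝ) : lintegralAbsRpow μ r (-u) = lintegralAbsRpow μ r u := by
  simp only [lintegralAbsRpow, Pi.neg_apply, abs_neg]

lemma lintegralAbsRpow_sub_le (hr0 : 0 ≤ r) (hr1 : r ≤ 1) {u : α → ℝ} (hu : AEMeasurable u μ)
    (v : α → ℝ) :
    lintegralAbsRpow μ r (u - v) ≤ lintegralAbsRpow μ r u + lintegralAbsRpow μ r v := by
  simpa only [sub_eq_add_neg, lintegralAbsRpow_neg] using lintegralAbsRpow_add_le hr0 hr1 hu (-v)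

lemma lintegralAbsRpow_eq_eLpNorm_rpow (hr : 0 < r) (u : α → ℝ) :
    lintegralAbsRpow μ r u = eLpNorm u (ENNReal.ofReal r) μ ^ r := by
  rw [eLpNorm_eq_lintegral_rpow_enorm_toReal (by simpa using hr) ofReal_ne_top,
    ENNReal.toReal_ofReal hr.le, ← ENNReal.rpow_mul, one_div_mul_cancel hr.ne', ENNReal.rpow_one]
  refine lintegral_congr fun x => ?_
  rw [Real.enorm_eq_ofReal_abs, ENNReal.ofReal_rpow_of_nonneg (abs_nonneg _) hr.le]

lemma memLp_iff_lintegralAbsRpow_lt_top (hr : 0 < r) {u : α → ℝ}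
    (hu : AEStronglyMeasurable u μ) :
    MemLp u (ENNReal.ofReal r) μ ↔ lintegralAbsRpow μ r u < ⊤ := by
  rw [lintegralAbsRpow_eq_eLpNorm_rpow hr, ENNReal.rpow_lt_top_iff_of_pos hr]
  exact ⟨MemLp.eLpNorm_lt_top, fun h => ⟨hu, h⟩⟩

end LintegralAbsRpow

section Coboundary

variable {G : Type*} [AddCommGroup G] [MeasurableSpace G] [MeasurableAdd G] {μ : Measure G}
  [μ.IsAddRightInvariant] {p : ℝ≥0∞}

lemma exists_sub_comp_add_eq_sub_comp_add_zsmul {g : G → ℝ} (hg : Measurable g)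
    (hgp : MemLp g p μ) (b : G) (n : ℤ) :
    ∃ h : G → ℝ, Measurable h ∧ MemLp h p μ ∧ ∀ x, h x - h (x + b) = g x - g (x + n • b) := by
  have translate (c : G) : Measurable (fun x => g (x + c)) ∧ MemLp (fun x => g (x + c)) p μ :=
    ⟨hg.comp (measurable_add_const c), hgp.comp_measurePreserving (measurePreserving_add_right μ c)⟩
  induction n using Int.induction_on with
  | zero => exact ⟨0, measurable_const, .zero, by simp⟩
  | succ n ih =>
    obtain ⟨h, hh, hhp, hcob⟩ := ih
    refine ⟨h + fun x => g (x + (n : ℤ) • b), hh.add (translate _).1, hhp.add (translate _).2,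
      fun x => ?_⟩
    have hx : x + b + (n : ℤ) • b = x + ((n : ℤ) + 1) • b := by rw [add_one_zsmul]; abel
    simp only [Pi.add_apply, hx]
    linarith [hcob x]
  | pred n ih =>
    obtain ⟨h, hh, hhp, hcob⟩ := ih
    refine ⟨h - fun x => g (x + (-(n : ℤ) - 1) • b), hh.sub (translate _).1,
      hhp.sub (translate _).2, fun x => ?_⟩
    have hx : x + b + (-(n : ℤ) - 1) • b = x + (-(n : ℤ)) • b := by
      rw [sub_zsmul, one_zsmul]; abel
    simp only [Pi.sub_apply, hx]
    linarith [hcob x]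

lemma lintegralAbsRpow_comp_add_right {r : ℝ} (u : G → ℝ) (c : G) :
    lintegralAbsRpow μ r (fun x => u (x + c)) = lintegralAbsRpow μ r u :=
  lintegral_add_right_eq_self (fun x => ENNReal.ofReal (|u x| ^ r)) c

end Coboundary

section Translation

variable {G : Type*} [TopologicalSpace G] [AddCommGroup G] [ContinuousAdd G]
  [CompactSpace G] [FirstCountableTopology G] [MeasurableSpace G] {μ : Measure G} {r : ℝ}

lemma tendsto_lintegralAbsRpow_comp_add_sub_of_continuous [OpensMeasurableSpace G]
    [IsFiniteMeasure μ] (hr : 0 < r) {c : G → ℝ} (hc : Continuous c) :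
    Tendsto (fun t => lintegralAbsRpow μ r fun x => c (x + t) - c x) (𝓝 0) (𝓝 0) := by
  obtain ⟨M, hM⟩ := (isCompact_range hc).isBounded.exists_norm_le
  have hcM (x : G) : |c x| ≤ M := hM _ (Set.mem_range_self x)
  have hlim := tendsto_lintegral_filter_of_dominated_convergence (μ := μ) (l := 𝓝 (0 : G))
    (F := fun t x => ENNReal.ofReal (|c (x + t) - c x| ^ r)) (f := fun _ => 0)
    (fun _ => ENNReal.ofReal ((2 * M) ^ r))
    (Eventually.of_forall fun t =>
      (((hc.comp (continuous_add_const t)).sub hc).measurable.abs.pow_const r).ennreal_ofReal)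
    (Eventually.of_forall fun t => Eventually.of_forall fun x => by
      gcongr
      calc |c (x + t) - c x| ≤ |c (x + t)| + |c x| := abs_sub _ _
        _ ≤ 2 * M := by linarith [hcM (x + t), hcM x])
    (by simp [lintegral_const, ENNReal.mul_eq_top, measure_ne_top])
    (Eventually.of_forall fun x => by
      have hcont : Continuous fun t => ENNReal.ofReal (|c (x + t) - c x| ^ r) := by
        refine ENNReal.continuous_ofReal.comp ?_
        fun_prop (disch := exact hr.le)
      simpa [Real.zero_rpow hr.ne'] using hcont.tendsto 0)
  simpa only [lintegralAbsRpow, lintegral_zero] using hlim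

lemma tendsto_lintegralAbsRpow_comp_add_sub [T2Space G] [BorelSpace G] [μ.Regular]
    [μ.IsAddRightInvariant] (hr0 : 0 < r) (hr1 : r ≤ 1) {g : G → ℝ}
    (hg : MemLp g (ENNReal.ofReal r) μ) :
    Tendsto (fun t => lintegralAbsRpow μ r fun x => g (x + t) - g x) (𝓝 0) (𝓝 0) := by
  refine ENNReal.tendsto_nhds_zero.2 fun ε hε => ?_
  have hε3 : 0 < ε / 3 := ENNReal.div_pos hε.ne' ofNat_ne_top
  obtain ⟨c, -, hgc, hc, -⟩ := hg.exists_hasCompactSupport_eLpNorm_sub_le ofReal_ne_top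
    (ENNReal.rpow_pos_of_nonneg (p := 1 / r) hε3 (by positivity)).ne'
  set w := g - c
  have hw : lintegralAbsRpow μ r w ≤ ε / 3 := by
    rw [lintegralAbsRpow_eq_eLpNorm_rpow hr0]
    calc eLpNorm w (ENNReal.ofReal r) μ ^ r ≤ ((ε / 3) ^ (1 / r)) ^ r := by gcongr
      _ = ε / 3 := by rw [← ENNReal.rpow_mul, one_div_mul_cancel hr0.ne', ENNReal.rpow_one]
  have hwm : AEMeasurable w μ := hg.1.aemeasurable.sub hc.measurable.aemeasurable
  filter_upwards [(tendsto_lintegralAbsRpow_comp_add_sub_of_continuous (μ := μ) hr0 hc)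
    |>.eventually_lt_const hε3] with t ht
  have hsplit : (fun x => g (x + t) - g x) =
      (fun x => w (x + t) - w x) + fun x => c (x + t) - c x := by
    ext x; simp only [w, Pi.add_apply, Pi.sub_apply]; ring
  have hwt : AEMeasurable (fun x => w (x + t)) μ :=
    hwm.comp_quasiMeasurePreserving (measurePreserving_add_right μ t).quasiMeasurePreserving
  calc lintegralAbsRpow μ r (fun x => g (x + t) - g x)
      ≤ lintegralAbsRpow μ r (fun x => w (x + t) - w x) +
          lintegralAbsRpow μ r (fun x => c (x + t) - c x) := by
        rw [hsplit]; exact lintegralAbsRpow_add_le hr0.le hr1 (hwt.sub hwm) _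
    _ ≤ lintegralAbsRpow μ r (fun x => w (x + t)) + lintegralAbsRpow μ r w +
          lintegralAbsRpow μ r (fun x => c (x + t) - c x) := by
        gcongr; exact lintegralAbsRpow_sub_le hr0.le hr1 hwt w
    _ ≤ ε / 3 + ε / 3 + ε / 3 := by
        rw [lintegralAbsRpow_comp_add_right]; gcongr
    _ = ε := ENNReal.add_thirds ε

end Translation

section Approximation

variable {G : Type*} [AddCommGroup G] [MeasurableSpace G]

/-- `f` lies in the `L^r`-closure of `(I - T) L^r`, where `T g = g (· + b)`. -/
def MemClosureCoboundaries (μ : Measure G) (r : ℝ) (b : G) (f : G → ℝ) : Prop :=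
  ∀ ε : ℝ≥0∞, 0 < ε → ∃ g : G → ℝ, Measurable g ∧ lintegralAbsRpow μ r g < ⊤ ∧
    lintegralAbsRpow μ r (fun x => f x - (g x - g (x + b))) < ε

variable [TopologicalSpace G] [IsTopologicalAddGroup G] [CompactSpace G] [T2Space G]
  [FirstCountableTopology G] [BorelSpace G] {μ : Measure G} [μ.Regular] [μ.IsAddRightInvariant]
  {r : ℝ}

theorem MemClosureCoboundaries.of_mem_closure_zmultiples (hr0 : 0 < r) (hr1 : r ≤ 1) {a b : G}
    (hab : a ∈ closure (AddSubgroup.zmultiples b : Set G)) {f : G → ℝ} (hf : Measurable f)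
    (hfa : MemClosureCoboundaries μ r a f) : MemClosureCoboundaries μ r b f := by
  intro ε hε
  have hε2 : 0 < ε / 2 := ENNReal.half_pos hε.ne'
  obtain ⟨g, hg, hgr, hfg⟩ := hfa (ε / 2) hε2
  have hgp := (memLp_iff_lintegralAbsRpow_lt_top hr0 hg.aestronglyMeasurable).2 hgr
  have hnear : ∀ᶠ s in 𝓝 a, lintegralAbsRpow μ r (fun x => g (x + (s - a)) - g x) < ε / 2 :=
    ((tendsto_lintegralAbsRpow_comp_add_sub hr0 hr1 hgp).comp
      (tendsto_sub_nhds_zero_iff.2 tendsto_id)).eventually_lt_const hε2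
  obtain ⟨_, hs, hn⟩ := ((mem_closure_iff_frequently.1 hab).and_eventually hnear).exists
  obtain ⟨n, rfl⟩ := AddSubgroup.mem_zmultiples_iff.1 hs
  obtain ⟨h, hh, hhp, hcob⟩ := exists_sub_comp_add_eq_sub_comp_add_zsmul hg hgp b n
  refine ⟨h, hh, (memLp_iff_lintegralAbsRpow_lt_top hr0 hh.aestronglyMeasurable).1 hhp, ?_⟩
  have hshift : lintegralAbsRpow μ r (fun x => g (x + n • b) - g (x + a)) =
      lintegralAbsRpow μ r (fun x => g (x + (n • b - a)) - g x) := by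
    rw [← lintegralAbsRpow_comp_add_right (fun x => g (x + (n • b - a)) - g x) a]
    simp only [add_add_sub_cancel]
  calc lintegralAbsRpow μ r (fun x => f x - (h x - h (x + b)))
      = lintegralAbsRpow μ r ((fun x => f x - (g x - g (x + a))) +
          fun x => g (x + n • b) - g (x + a)) := by
        congr 1; ext x; simp only [hcob, Pi.add_apply]; ring
    _ ≤ lintegralAbsRpow μ r (fun x => f x - (g x - g (x + a))) +
          lintegralAbsRpow μ r (fun x => g (x + n • b) - g (x + a)) :=
        lintegralAbsRpow_add_le hr0.le hr1
          (hf.sub (hg.sub (hg.comp (measurable_add_const a)))).aemeasurable _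
    _ < ε / 2 + ε / 2 := ENNReal.add_lt_add hfg (hshift ▸ hn)
    _ = ε := ENNReal.add_halves ε

end Approximation

lemma AddCircle.dense_zmultiples_coe {p γ : ℝ} (hγ : Irrational (γ / p)) :
    Dense (AddSubgroup.zmultiples (γ : AddCircle p) : Set (AddCircle p)) := by
  rw [AddSubgroup.coe_zmultiples]
  exact AddCircle.denseRange_zsmul_coe_iff.2 hγ

theorem stmt5_general (α β : ℝ) (hα : Irrational α) (hβ : Irrational β)
    (r : ℝ) (hr0 : 0 < r) (hr1 : r < 1)
    (f : AddCircle (1 : ℝ) → ℝ) (hf : Measurable f) :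
    ((∀ ε : ℝ≥0∞, 0 < ε → ∃ g : AddCircle (1 : ℝ) → ℝ, Measurable g ∧
        (∫⁻ x, ENNReal.ofReal (|g x| ^ r) < ⊤) ∧
        ∫⁻ x, ENNReal.ofReal (|f x - (g x - g (x + (α : AddCircle (1 : ℝ))))| ^ r) < ε) ↔
      (∀ ε : ℝ≥0∞, 0 < ε → ∃ g : AddCircle (1 : ℝ) → ℝ, Measurable g ∧
        (∫⁻ x, ENNReal.ofReal (|g x| ^ r) < ⊤) ∧
        ∫⁻ x, ENNReal.ofReal (|f x - (g x - g (x + (β : AddCircle (1 : ℝ))))| ^ r) < ε)) :=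
  ⟨MemClosureCoboundaries.of_mem_closure_zmultiples hr0 hr1.le
      (AddCircle.dense_zmultiples_coe (by simpa using hβ) _) hf,
    MemClosureCoboundaries.of_mem_closure_zmultiples hr0 hr1.le
      (AddCircle.dense_zmultiples_coe (by simpa using hα) _) hf⟩

/-- For two irrational rotations `T`, `S` of the circle, and `0 < r < 1`,
the `L^r`-closures of `(I-T)L^r` and `(I-S)L^r` coincide: a function `f ∈ L^r` can be
approximated in the `L^r` metric by `T`-coboundaries iff it can be approximated by
`S`-coboundaries. -/
theorem stmt5 (α β : ℝ) (hα : Irrational α) (hβ : Irrational β)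
    (r : ℝ) (hr0 : 0 < r) (hr1 : r < 1)
    (f : AddCircle (1 : ℝ) → ℝ) (hf : Measurable f)
    (hfLr : ∫⁻ x, ENNReal.ofReal (|f x| ^ r) < ⊤) :
    ((∀ ε : ℝ≥0∞, 0 < ε → ∃ g : AddCircle (1 : ℝ) → ℝ, Measurable g ∧
        (∫⁻ x, ENNReal.ofReal (|g x| ^ r) < ⊤) ∧
        ∫⁻ x, ENNReal.ofReal (|f x - (g x - g (x + (α : AddCircle (1 : ℝ))))| ^ r) < ε) ↔
      (∀ ε : ℝ≥0∞, 0 < ε → ∃ g : AddCircle (1 : ℝ) → ℝ, Measurable g ∧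
        (∫⁻ x, ENNReal.ofReal (|g x| ^ r) < ⊤) ∧
        ∫⁻ x, ENNReal.ofReal (|f x - (g x - g (x + (β : AddCircle (1 : ℝ))))| ^ r) < ε)) :=
  stmt5_general α β hα hβ r hr0 hr1 f hf
end

section
/- Let (X,Σ,μ) be a probability space with an ergodic aperiodic (invertible or not) measure preserving transformation θ on a Lebesgue space, and Tf = f∘θ. Then there exists 0 ≤ h ∈ L¹(μ) such that for every 0<r<1, limsup_n T^n h / n^r = ∞ μ-a.e. -/
/-!
Rokhlin towers do the work. On a standard Borel space, aperiodicity gives sets `A` of arbitrarily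
small positive measure (a basic open set separates a generic point from the next `N - 1` points of
its orbit), and ergodicity makes almost every orbit enter `A`. The points whose first entrance time
into `A` is a positive multiple of `N` form the base `B` of a tower of height `N`: its first `N`
levels are disjoint, and they cover everything except measure at most `N μ(A)`.

Take towers of heights `N_k = 2^k 2^(k²)` with errors `2^(-k)` and `h = ∑ₖ 2^(k²) 1_{B_k}`, so that
`∫ h ≤ ∑ₖ 2^(k²) / N_k = 2`. By Borel–Cantelli almost every orbit visits `B_k` at some time
`1 ≤ n ≤ N_k` for all large `k`, and there `h(θ^n x) / n^r ≥ 2^(k²) / N_k^r = 2^(k((1-r)k - r))`.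
-/

open MeasureTheory Filter ENNReal Set Function

section Orbits

variable {X : Type*} {θ : X → X} {A : Set X} {m m' : ℕ} {x : X}

theorem pairwise_disjoint_preimage_iterate_diff (W : Set X) (N : ℕ) :
    Pairwise (Disjoint on fun i : Fin N =>
      θ^[i] ⁻¹' (W \ ⋃ j ∈ Finset.Ico 1 N, θ^[j] ⁻¹' W)) := by
  refine (pairwise_disjoint_on _).2 fun i j hij => disjoint_left.2 fun x hi hj => ?_
  refine hi.2 (mem_biUnion (x := (j - i : ℕ)) (Finset.mem_Ico.2 (by omega)) ?_)
  rw [mem_preimage, ← iterate_add_apply, Nat.sub_add_cancel (Fin.le_of_lt hij)]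
  exact hj.1

def firstHitSet (θ : X → X) (A : Set X) (m : ℕ) : Set X :=
  θ^[m] ⁻¹' A \ ⋃ l ∈ Finset.Ioo 0 m, θ^[l] ⁻¹' A

theorem iterate_mem_firstHitSet {d : ℕ} (hx : x ∈ firstHitSet θ A m) (hd : d < m) :
    θ^[d] x ∈ firstHitSet θ A (m - d) := by
  refine ⟨?_, fun hl => ?_⟩
  · rw [mem_preimage, ← iterate_add_apply, Nat.sub_add_cancel hd.le]
    exact hx.1
  · obtain ⟨l, hl, hlA⟩ := mem_iUnion₂.1 hl
    rw [Finset.mem_Ioo] at hl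
    refine hx.2 (mem_iUnion₂.2 ⟨l + d, Finset.mem_Ioo.2 (by omega), ?_⟩)
    rwa [mem_preimage, iterate_add_apply]

theorem eq_of_mem_firstHitSet (h : x ∈ firstHitSet θ A m) (h' : x ∈ firstHitSet θ A m')
    (hm : 0 < m) (hm' : 0 < m') : m = m' := by
  by_contra hne
  rcases Nat.lt_or_gt_of_ne hne with hlt | hlt
  · exact h'.2 (mem_iUnion₂.2 ⟨m, Finset.mem_Ioo.2 ⟨hm, hlt⟩, h.1⟩)
  · exact h.2 (mem_iUnion₂.2 ⟨m', Finset.mem_Ioo.2 ⟨hm', hlt⟩, h'.1⟩)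

theorem exists_mem_firstHitSet (h : ∃ n, 0 < n ∧ θ^[n] x ∈ A) :
    ∃ m, 0 < m ∧ x ∈ firstHitSet θ A m := by
  classical
  refine ⟨Nat.find h, (Nat.find_spec h).1, (Nat.find_spec h).2, fun hl => ?_⟩
  obtain ⟨l, hl, hlA⟩ := mem_iUnion₂.1 hl
  rw [Finset.mem_Ioo] at hl
  exact Nat.find_min h hl.2 ⟨hl.1, hlA⟩

theorem measurableSet_firstHitSet [MeasurableSpace X] (hθ : Measurable θ) (hA : MeasurableSet A)
    (m : ℕ) : MeasurableSet (firstHitSet θ A m) :=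
  (hθ.iterate m hA).diff (Finset.measurableSet_biUnion _ fun l _ => hθ.iterate l hA)

def rokhlinBase (θ : X → X) (A : Set X) (N : ℕ) : Set X :=
  ⋃ q : ℕ, firstHitSet θ A ((q + 1) * N)

theorem pairwise_disjoint_preimage_iterate_rokhlinBase (θ : X → X) (A : Set X) (N : ℕ) :
    Pairwise (Disjoint on fun i : Fin N => θ^[i] ⁻¹' rokhlinBase θ A N) := by
  refine (pairwise_disjoint_on _).2 fun i j hij => disjoint_left.2 fun x hi hj => ?_
  obtain ⟨a, ha⟩ := mem_iUnion.1 hi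
  obtain ⟨b, hb⟩ := mem_iUnion.1 hj
  have hij' : (i : ℕ) < j := hij
  have hjN : (j : ℕ) < N := j.isLt
  have haN : N ≤ (a + 1) * N := Nat.le_mul_of_pos_left N a.succ_pos
  have hbN : N ≤ (b + 1) * N := Nat.le_mul_of_pos_left N b.succ_pos
  have hshift := iterate_mem_firstHitSet ha (d := j - i) (by omega)
  rw [← iterate_add_apply, Nat.sub_add_cancel hij'.le] at hshift
  have heq := eq_of_mem_firstHitSet hshift hb (by omega) (by omega)
  -- two multiples of `N` cannot differ by `j - i ∈ (0, N)`
  rcases le_or_gt a b with hab | hab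
  · have := Nat.mul_le_mul_right N (show a + 1 ≤ b + 1 by omega)
    omega
  · have := Nat.mul_le_mul_right N (show b + 1 + 1 ≤ a + 1 by omega)
    rw [Nat.succ_mul] at this
    omega

theorem compl_iUnion_preimage_iterate_rokhlinBase_subset {N : ℕ} (hN : 0 < N) :
    (⋃ n ∈ Finset.Icc 1 N, θ^[n] ⁻¹' rokhlinBase θ A N)ᶜ ⊆
      {x | ¬∃ n, 0 < n ∧ θ^[n] x ∈ A} ∪ ⋃ n ∈ Finset.Icc 1 N, θ^[n] ⁻¹' A := by
  intro x hx
  by_cases hhit : ∃ n, 0 < n ∧ θ^[n] x ∈ A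
  swap
  · exact Or.inl hhit
  obtain ⟨t, ht0, ht⟩ := exists_mem_firstHitSet hhit
  by_cases htN : t ≤ N
  · exact Or.inr (mem_iUnion₂.2 ⟨t, Finset.mem_Icc.2 ⟨ht0, htN⟩, ht.1⟩)
  -- otherwise `n := (t - 1) % N + 1 ∈ [1, N]` makes `t - n` a positive multiple of `N`
  have hmod := Nat.mod_lt (t - 1) hN
  have hdiv := Nat.div_add_mod (t - 1) N
  have hq : 1 ≤ (t - 1) / N := (Nat.one_le_div_iff hN).2 (by omega)
  have hmul : ((t - 1) / N - 1 + 1) * N = t - ((t - 1) % N + 1) := by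
    rw [Nat.sub_add_cancel hq, Nat.mul_comm]
    omega
  refine absurd (mem_iUnion₂.2 ⟨(t - 1) % N + 1, Finset.mem_Icc.2 ⟨by omega, by omega⟩,
    mem_iUnion.2 ⟨(t - 1) / N - 1, ?_⟩⟩) hx
  rw [hmul]
  exact iterate_mem_firstHitSet ht (by omega)

end Orbits

section Measure

variable {X : Type*} [MeasurableSpace X] {μ : Measure X} {θ : X → X}

def Aperiodic (θ : X → X) (μ : Measure X) : Prop :=
  μ {x | ∃ n : ℕ, 0 < n ∧ θ^[n] x = x} = 0

theorem MeasureTheory.Measure.QuasiMeasurePreserving.ae_forall_iterate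
    (hθ : Measure.QuasiMeasurePreserving θ μ μ) {p : X → Prop} (h : ∀ᵐ x ∂μ, p x) :
    ∀ᵐ x ∂μ, ∀ n, p (θ^[n] x) :=
  ae_all_iff.2 fun n => (hθ.iterate n).ae h

theorem ae_injective_iterate (hθ : Measure.QuasiMeasurePreserving θ μ μ)
    (haper : Aperiodic θ μ) : ∀ᵐ x ∂μ, Injective fun n => θ^[n] x := by
  filter_upwards [hθ.ae_forall_iterate (measure_eq_zero_iff_ae_notMem.1 haper)] with x hx
  refine Injective.of_lt_imp_ne fun i j hij heq => hx i ⟨j - i, Nat.sub_pos_of_lt hij, ?_⟩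
  rw [← iterate_add_apply, Nat.sub_add_cancel hij.le, heq]

theorem exists_pos_measure_pairwise_disjoint_preimage_iterate [StandardBorelSpace X] [NeZero μ]
    (hθ : Measure.QuasiMeasurePreserving θ μ μ) (haper : Aperiodic θ μ) (N : ℕ) :
    ∃ A, MeasurableSet A ∧ 0 < μ A ∧ Pairwise (Disjoint on fun i : Fin N => θ^[i] ⁻¹' A) := by
  obtain ⟨g, hg⟩ := exists_measurableEmbedding_real X
  obtain ⟨b, hbc, -, hb⟩ := TopologicalSpace.exists_countable_basis ℝ
  set F : Set ℝ → Set X := fun V => g ⁻¹' V \ ⋃ j ∈ Finset.Ico 1 N, θ^[j] ⁻¹' (g ⁻¹' V)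
  -- an injective orbit is separated from its first `N` points by some basic open set
  have hcover : ∀ᵐ x ∂μ, x ∈ ⋃ V ∈ b, F V := by
    filter_upwards [ae_injective_iterate hθ haper] with x hx
    have hS : g x ∉ (Finset.Ico 1 N).image fun j => g (θ^[j] x) := by
      simp only [Finset.mem_image, Finset.mem_Ico, not_exists, not_and]
      intro j hj heq
      have : j = 0 := hx (a₂ := 0) (hg.injective heq)
      omega
    obtain ⟨V, hVb, hxV, hVS⟩ :=
      hb.exists_subset_of_mem_open hS (Finset.finite_toSet _).isClosed.isOpen_compl
    refine mem_biUnion hVb ⟨hxV, fun hx' => ?_⟩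
    obtain ⟨j, hj, hjV⟩ := mem_iUnion₂.1 hx'
    exact hVS hjV (Finset.mem_image_of_mem _ hj)
  obtain ⟨V, hVb, hV⟩ : ∃ V ∈ b, 0 < μ (F V) := by
    by_contra! h
    have hnull : μ (⋃ V ∈ b, F V) = 0 :=
      (measure_biUnion_null_iff hbc).2 fun V hV => nonpos_iff_eq_zero.1 (h V hV)
    refine NeZero.ne μ (ae_eq_bot.1 (eventually_false_iff_eq_bot.1 ?_))
    filter_upwards [hcover, measure_eq_zero_iff_ae_notMem.1 hnull] with x h1 h2 using h2 h1
  have hW : MeasurableSet (g ⁻¹' V) := hg.measurable (hb.isOpen hVb).measurableSet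
  refine ⟨F V, hW.diff (Finset.measurableSet_biUnion _ fun j _ => hθ.measurable.iterate j hW),
    hV, pairwise_disjoint_preimage_iterate_diff _ N⟩

theorem MeasureTheory.MeasurePreserving.natCast_mul_measure_le_of_pairwise_disjoint
    (hθ : MeasurePreserving θ μ μ) {A : Set X} (hA : MeasurableSet A) {N : ℕ}
    (hd : Pairwise (Disjoint on fun i : Fin N => θ^[i] ⁻¹' A)) :
    N * μ A ≤ μ univ :=
  calc (N : ℝ≥0∞) * μ A = ∑ i : Fin N, μ (θ^[i] ⁻¹' A) := by
        simp [(hθ.iterate _).measure_preimage hA.nullMeasurableSet]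
    _ = μ (⋃ i : Fin N, θ^[i] ⁻¹' A) := by
        rw [measure_iUnion hd fun i => (hθ.iterate i).measurable hA, tsum_fintype]
    _ ≤ μ univ := measure_mono (subset_univ _)

theorem Ergodic.ae_exists_iterate_mem [IsFiniteMeasure μ] (herg : Ergodic θ μ) {A : Set X}
    (hA : MeasurableSet A) (hA0 : μ A ≠ 0) : ∀ᵐ x ∂μ, ∃ n, 0 < n ∧ θ^[n] x ∈ A := by
  set V := ⋃ n : ℕ, θ^[n] ⁻¹' A
  have hθV : θ ⁻¹' V ⊆ V := fun x hx => by
    obtain ⟨n, hn⟩ := mem_iUnion.1 hx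
    exact mem_iUnion.2 ⟨n + 1, by rwa [mem_preimage, iterate_succ_apply]⟩
  have hV : ∀ᵐ x ∂μ, x ∈ V := by
    have hVm : MeasurableSet V := MeasurableSet.iUnion fun n => herg.measurable.iterate n hA
    rcases herg.ae_empty_or_univ_of_preimage_ae_le hVm.nullMeasurableSet hθV.eventuallyLE
      with h | h
    · exact absurd (measure_mono_null (subset_iUnion (fun n => θ^[n] ⁻¹' A) 0)
        (ae_eq_empty.1 h)) hA0
    · exact ae_eq_univ.1 h
  filter_upwards [herg.quasiMeasurePreserving.ae hV] with x hx
  obtain ⟨n, hn⟩ := mem_iUnion.1 hx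
  exact ⟨n + 1, n.succ_pos, by rwa [iterate_succ_apply]⟩

theorem Ergodic.measure_compl_iUnion_preimage_iterate_rokhlinBase_le [IsFiniteMeasure μ]
    (herg : Ergodic θ μ) {A : Set X} (hA : MeasurableSet A) (hA0 : μ A ≠ 0) {N : ℕ} (hN : 0 < N) :
    μ (⋃ n ∈ Finset.Icc 1 N, θ^[n] ⁻¹' rokhlinBase θ A N)ᶜ ≤ N * μ A :=
  calc μ (⋃ n ∈ Finset.Icc 1 N, θ^[n] ⁻¹' rokhlinBase θ A N)ᶜ
      ≤ μ {x | ¬∃ n, 0 < n ∧ θ^[n] x ∈ A} + μ (⋃ n ∈ Finset.Icc 1 N, θ^[n] ⁻¹' A) :=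
        (measure_mono (compl_iUnion_preimage_iterate_rokhlinBase_subset hN)).trans
          (measure_union_le _ _)
    _ ≤ 0 + ∑ n ∈ Finset.Icc 1 N, μ (θ^[n] ⁻¹' A) :=
        add_le_add (ae_iff.1 (herg.ae_exists_iterate_mem hA hA0)).le
          (measure_biUnion_finset_le _ _)
    _ = N * μ A := by
        simp [(herg.toMeasurePreserving.iterate _).measure_preimage hA.nullMeasurableSet]

theorem exists_pos_measure_lt_of_aperiodic [StandardBorelSpace X] [IsFiniteMeasure μ] [NeZero μ]
    (hθ : MeasurePreserving θ μ μ) (haper : Aperiodic θ μ) {ε : ℝ≥0∞} (hε : ε ≠ 0) :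
    ∃ A, MeasurableSet A ∧ 0 < μ A ∧ μ A < ε := by
  obtain ⟨N, hN⟩ := ENNReal.exists_nat_mul_gt hε (measure_ne_top μ univ)
  obtain ⟨A, hA, hA0, hd⟩ :=
    exists_pos_measure_pairwise_disjoint_preimage_iterate hθ.quasiMeasurePreserving haper N
  exact ⟨A, hA, hA0, lt_of_mul_lt_mul_left'
    ((hθ.natCast_mul_measure_le_of_pairwise_disjoint hA hd).trans_lt hN)⟩

theorem Ergodic.exists_rokhlin_tower [StandardBorelSpace X] [IsFiniteMeasure μ] [NeZero μ]
    (herg : Ergodic θ μ) (haper : Aperiodic θ μ) {N : ℕ} (hN : 0 < N) {ε : ℝ≥0∞} (hε : ε ≠ 0) :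
    ∃ B, MeasurableSet B ∧ Pairwise (Disjoint on fun i : Fin N => θ^[i] ⁻¹' B) ∧
      μ (⋃ n ∈ Finset.Icc 1 N, θ^[n] ⁻¹' B)ᶜ ≤ ε := by
  obtain ⟨A, hA, hA0, hAε⟩ := exists_pos_measure_lt_of_aperiodic herg.toMeasurePreserving haper
    (ENNReal.div_pos hε (natCast_ne_top N)).ne'
  refine ⟨rokhlinBase θ A N,
    MeasurableSet.iUnion fun q => measurableSet_firstHitSet herg.measurable hA _,
    pairwise_disjoint_preimage_iterate_rokhlinBase θ A N,
    (herg.measure_compl_iUnion_preimage_iterate_rokhlinBase_le hA hA0.ne' hN).trans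
      (ENNReal.mul_le_of_le_div' hAε.le)⟩

theorem Ergodic.exists_seq_rokhlin_bases [StandardBorelSpace X] [IsFiniteMeasure μ] [NeZero μ]
    (herg : Ergodic θ μ) (haper : Aperiodic θ μ) (N : ℕ → ℕ) (hN : ∀ k, 0 < N k) :
    ∃ B : ℕ → Set X, (∀ k, MeasurableSet (B k)) ∧ (∀ k, N k * μ (B k) ≤ μ univ) ∧
      ∀ᵐ x ∂μ, ∀ᶠ k in atTop, ∃ n ∈ Finset.Icc 1 (N k), θ^[n] x ∈ B k := by
  choose B hBm hBd hBε using fun k =>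
    herg.exists_rokhlin_tower haper (hN k) (ε := 2⁻¹ ^ k) (by simp)
  refine ⟨B, hBm, fun k =>
    herg.toMeasurePreserving.natCast_mul_measure_le_of_pairwise_disjoint (hBm k) (hBd k), ?_⟩
  have hsum : ∑' k, μ (⋃ n ∈ Finset.Icc 1 (N k), θ^[n] ⁻¹' B k)ᶜ ≠ ⊤ :=
    ne_top_of_le_ne_top (by simp) (ENNReal.tsum_le_tsum hBε)
  filter_upwards [ae_eventually_notMem hsum] with x hx
  filter_upwards [hx] with k hk
  simpa only [mem_compl_iff, not_not, mem_iUnion₂, mem_preimage, exists_prop] using hk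

theorem exists_integrable_ge_of_tsum_mul_measure_ne_top {B : ℕ → Set X}
    (hB : ∀ k, MeasurableSet (B k)) (c : ℕ → ℝ≥0∞) (hc : ∑' k, c k * μ (B k) ≠ ⊤) :
    ∃ h : X → ℝ, Measurable h ∧ (∀ x, 0 ≤ h x) ∧ Integrable h μ ∧
      ∀ᵐ x ∂μ, ∀ k, x ∈ B k → (c k).toReal ≤ h x := by
  set H : X → ℝ≥0∞ := fun x => ∑' k, (B k).indicator (fun _ => c k) x
  have hHm : Measurable H := Measurable.tsum fun k => measurable_const.indicator (hB k)
  have hH : ∫⁻ x, H x ∂μ ≠ ⊤ := by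
    rwa [lintegral_tsum fun k => (measurable_const.indicator (hB k)).aemeasurable,
      tsum_congr fun k => lintegral_indicator_const (hB k) (c k)]
  refine ⟨fun x => (H x).toReal, hHm.ennreal_toReal, fun x => toReal_nonneg,
    integrable_toReal_of_lintegral_ne_top hHm.aemeasurable hH, ?_⟩
  filter_upwards [ae_lt_top hHm hH] with x hx k hxk
  refine toReal_mono hx.ne ?_
  simpa [indicator_of_mem hxk] using
    ENNReal.le_tsum (f := fun k => (B k).indicator (fun _ => c k) x) k

end Measure

theorem limsup_ofReal_eq_top_of_not_bddAbove {v : ℕ → ℝ} (hv : ¬BddAbove (range v)) :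
    limsup (fun n => ENNReal.ofReal (v n)) atTop = ⊤ := by
  refine eq_top_iff.2 (ENNReal.iSup_natCast ▸ iSup_le fun M => le_limsup_of_frequently_le' ?_)
  refine Frequently.mono ?_ fun n hn => ofReal_natCast M ▸ ofReal_le_ofReal hn
  by_contra h
  rw [not_frequently] at h
  exact hv (IsBoundedUnder.bddAbove_range
    ⟨M, eventually_map.2 (h.mono fun n hn => (not_le.1 hn).le)⟩)

theorem tendsto_two_pow_sq_div_rpow {r : ℝ} (hr : r < 1) :
    Tendsto (fun k : ℕ => (2 : ℝ) ^ (k ^ 2) / ((2 ^ k * 2 ^ (k ^ 2) : ℕ) : ℝ) ^ r) atTop atTop := by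
  have he : ∀ k : ℕ, (2 : ℝ) ^ (k ^ 2) / ((2 ^ k * 2 ^ (k ^ 2) : ℕ) : ℝ) ^ r =
      (2 : ℝ) ^ ((k : ℝ) * ((1 - r) * k - r)) := by
    intro k
    rw [← pow_add, Nat.cast_pow, Nat.cast_ofNat, ← Real.rpow_natCast, ← Real.rpow_natCast,
      ← Real.rpow_mul zero_le_two, ← Real.rpow_sub zero_lt_two]
    push_cast
    ring_nf
  simp_rw [he]
  refine (tendsto_rpow_atTop_of_base_gt_one 2 one_lt_two).comp
    (tendsto_natCast_atTop_atTop.atTop_mul_atTop₀ ?_)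
  exact tendsto_atTop_add_const_right _ _
    (tendsto_natCast_atTop_atTop.const_mul_atTop (sub_pos.2 hr))

theorem stmt6_general {X : Type*} [MeasurableSpace X] [StandardBorelSpace X]
    (μ : Measure X) [IsProbabilityMeasure μ]
    (θ : X → X) (herg : Ergodic θ μ)
    (haper : μ {x | ∃ n : ℕ, 0 < n ∧ θ^[n] x = x} = 0) :
    ∃ h : X → ℝ, Measurable h ∧ (∀ x, 0 ≤ h x) ∧ Integrable h μ ∧
      ∀ r : ℝ, 0 < r → r < 1 →
        ∀ᵐ x ∂μ, Filter.limsup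
          (fun n : ℕ => ENNReal.ofReal (h (θ^[n] x) / (n : ℝ) ^ r)) atTop = ⊤ := by
  obtain ⟨B, hBm, hBμ, hhit⟩ :=
    herg.exists_seq_rokhlin_bases haper (fun k => 2 ^ k * 2 ^ (k ^ 2)) fun k => by positivity
  have hsum : ∑' k, (2 : ℝ≥0∞) ^ (k ^ 2) * μ (B k) ≠ ⊤ := by
    refine ne_top_of_le_ne_top (ENNReal.tsum_geometric_two ▸ ofNat_ne_top)
      (ENNReal.tsum_le_tsum fun k => ?_)
    rw [← ENNReal.inv_pow, ENNReal.le_inv_iff_mul_le, mul_comm, ← mul_assoc,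
      ← measure_univ (μ := μ)]
    exact_mod_cast hBμ k
  obtain ⟨h, hm, h0, hint, hge⟩ := exists_integrable_ge_of_tsum_mul_measure_ne_top hBm _ hsum
  refine ⟨h, hm, h0, hint, fun r hr0 hr1 => ?_⟩
  filter_upwards [hhit, herg.quasiMeasurePreserving.ae_forall_iterate hge] with x hx hxge
  refine limsup_ofReal_eq_top_of_not_bddAbove (not_bddAbove_iff.2 fun M => ?_)
  obtain ⟨k, hkM, n, hn, hxn⟩ :=
    (((tendsto_two_pow_sq_div_rpow hr1).eventually_gt_atTop M).and hx).exists
  obtain ⟨hn1, hnN⟩ := Finset.mem_Icc.1 hn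
  refine ⟨_, ⟨n, rfl⟩, hkM.trans_le ?_⟩
  have hk := hxge n k hxn
  simp only [toReal_pow, toReal_ofNat] at hk
  exact div_le_div₀ (h0 _) hk (by positivity)
    (Real.rpow_le_rpow (by positivity) (by exact_mod_cast hnN) hr0.le)

/-- For an ergodic aperiodic measure preserving transformation `θ` of a
Lebesgue probability space, there is `0 ≤ h ∈ L¹(μ)` such that for every `0 < r < 1`,
`limsup_n T^n h / n^r = ∞` a.e. -/
theorem stmt6 {X : Type*} [MeasurableSpace X] [StandardBorelSpace X]
    (μ : Measure X) [IsProbabilityMeasure μ]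
    (θ : X → X) (hθ : MeasurePreserving θ μ μ) (herg : Ergodic θ μ)
    (haper : μ {x | ∃ n : ℕ, 0 < n ∧ θ^[n] x = x} = 0) :
    ∃ h : X → ℝ, Measurable h ∧ (∀ x, 0 ≤ h x) ∧ Integrable h μ ∧
      ∀ r : ℝ, 0 < r → r < 1 →
        ∀ᵐ x ∂μ, Filter.limsup
          (fun n : ℕ => ENNReal.ofReal (h (θ^[n] x) / (n : ℝ) ^ r)) atTop = ⊤ :=
  stmt6_general μ θ herg haper
end

section
/- Let α be irrational with continued fraction denominators (q_n), let θx = x + α mod 1 on [0,1) with Lebesgue measure, and Tf = f∘θ. Define h = ∑_{n=1}^∞ n^{-2} q_n 1_{[0, 2/q_n]}. Then h ∈ L¹([0,1)) and for every 0<r<1, limsup_n T^n h(x)/n^r = ∞ for a.e. x. -/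
/-!
If `p_n / q_n` are the convergents of `α`, then `p_n, q_n` are coprime and
`|q_n α - p_n| ≤ 1 / q_n`. So as `k < q_n` varies, `k p_n / q_n` runs through all multiples of
`1 / q_n` modulo `1`, and `k α` is within `1 / q_n` of it, with a drift of fixed sign. Hence
every orbit of the rotation enters `[0, 2 / q_n]` at some time `k < q_n`, where
`h ≥ n⁻² q_n`, so that `h(θᵏ x) / kʳ ≥ n⁻² q_n^{1-r}`. This is unbounded because
`q_{n+1} ≥ φⁿ`, and the entrance times tend to infinity whenever the orbit of `x` avoids `0`,
which holds almost everywhere. Integrability is immediate: the `n`-th term of `h` has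
integral `2 n⁻²`.
-/

open MeasureTheory Filter

namespace GenContFract

variable {K : Type*} [Field K] [LinearOrder K] [FloorRing K] (v : K)

theorem exists_int_contsAux_eq (n : ℕ) :
    ∃ a b : ℤ, (GenContFract.of v).contsAux n = ⟨a, b⟩ := by
  induction n using Nat.twoStepInduction with
  | zero => exact ⟨1, 0, by simp [contsAux]⟩
  | one => exact ⟨⌊v⌋, 1, by simp [contsAux, of_h_eq_floor]⟩
  | more n ih₀ ih₁ =>
    obtain ⟨a₀, b₀, h₀⟩ := ih₀
    obtain ⟨a₁, b₁, h₁⟩ := ih₁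
    cases hs : (GenContFract.of v).s.get? n with
    | none => exact ⟨a₁, b₁, by simp only [contsAux, hs, h₁]⟩
    | some gp =>
      obtain ⟨ha, z, hz⟩ := of_partNum_eq_one_and_exists_int_partDen_eq hs
      refine ⟨z * a₁ + a₀, z * b₁ + b₀, ?_⟩
      rw [contsAux_recurrence hs h₀ h₁, ha, hz]
      push_cast
      ring_nf

theorem exists_int_num_den_eq (n : ℕ) :
    ∃ p q : ℤ, (GenContFract.of v).nums n = p ∧ (GenContFract.of v).dens n = q := by
  obtain ⟨p, q, h⟩ := exists_int_contsAux_eq v (n + 1)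
  exact ⟨p, q, by rw [num_eq_conts_a, nth_cont_eq_succ_nth_contAux, h],
    by rw [den_eq_conts_b, nth_cont_eq_succ_nth_contAux, h]⟩

end GenContFract

theorem IsCoprime.exists_nat_lt_mul_eq_add_mul {p : ℤ} {q : ℕ} (hpq : IsCoprime p q)
    (hq : 0 < q) (j : ℤ) : ∃ k : ℕ, k < q ∧ ∃ t : ℤ, k * p = j + q * t := by
  obtain ⟨a, b, hab⟩ := hpq
  have hq' : (0 : ℤ) < q := by exact_mod_cast hq
  have := Int.emod_lt_of_pos (j * a) hq'
  refine ⟨(j * a % q).toNat, by omega, -(j * b + j * a / q * p), ?_⟩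
  rw [Int.toNat_of_nonneg (Int.emod_nonneg _ hq'.ne'), Int.emod_def]
  linear_combination j * hab

theorem exists_lt_fract_add_mul_eq {α : ℝ} {q : ℕ} {p : ℤ} (hq : 0 < q) (hpq : IsCoprime p q)
    (x c : ℝ) : ∃ k : ℕ, k < q ∧ ∃ s, c ≤ s ∧ s < c + 1 / q ∧
      Int.fract (x + k * α) = Int.fract (s + k / q * (q * α - p)) := by
  have hq' : (0 : ℝ) < q := by exact_mod_cast hq
  set j := ⌈q * (c - x)⌉
  obtain ⟨k, hkq, t, hkt⟩ := hpq.exists_nat_lt_mul_eq_add_mul hq j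
  have hkt' : (k : ℝ) * p = j + q * t := by exact_mod_cast hkt
  have hj : (j : ℝ) = q * (j / q) := by field_simp
  refine ⟨k, hkq, x + j / q, ?_, ?_, ?_⟩
  · have := Int.le_ceil (q * (c - x))
    rw [hj] at this
    nlinarith
  · have := Int.ceil_lt_add_one (q * (c - x))
    rw [hj] at this
    have : q * (1 / q : ℝ) = 1 := by field_simp
    nlinarith
  · have : (k : ℝ) / q * (q * α - p) = k * α - j / q - t := by
      field_simp
      linear_combination -hkt'
    rw [this, ← Int.fract_sub_intCast _ t]
    ring_nf

theorem exists_lt_fract_add_mul_le {α : ℝ} {q : ℕ} {p : ℤ} (hq : 0 < q) (hpq : IsCoprime p q)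
    (happrox : |q * α - p| ≤ 1 / q) (x : ℝ) :
    ∃ k : ℕ, k < q ∧ Int.fract (x + k * α) ≤ 2 / q := by
  have hq' : (0 : ℝ) < q := by exact_mod_cast hq
  set δ := q * α - p
  -- put `s` in the half of `[0, 2 / q]` from which the drift `k / q * δ`, of size at most
  -- `1 / q`, points inwards
  obtain ⟨k, hkq, s, hs₀, hs₁, hk⟩ :=
    exists_lt_fract_add_mul_eq (α := α) hq hpq x (if 0 ≤ δ then 0 else 1 / q)
  refine ⟨k, hkq, ?_⟩
  have hk₀ : 0 ≤ (k : ℝ) / q := by positivity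
  have hk₁ : (k : ℝ) / q ≤ 1 := (div_le_one hq').2 (by exact_mod_cast hkq.le)
  have hδ := abs_le.1 happrox
  have h2 : (2 : ℝ) / q = 1 / q + 1 / q := by ring
  have hv : 0 ≤ s + k / q * δ ∧ s + k / q * δ ≤ 2 / q := by
    split_ifs at hs₀ hs₁ with h
    · have := mul_le_mul_of_nonneg_right hk₁ h
      constructor <;> linarith [mul_nonneg hk₀ h]
    · have := mul_le_mul_of_nonpos_right hk₁ (not_le.1 h).le
      constructor <;> linarith [mul_nonpos_of_nonneg_of_nonpos hk₀ (not_le.1 h).le]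
  rw [hk]
  calc Int.fract (s + k / q * δ) ≤ s + k / q * δ := by
        rw [Int.fract, sub_le_self_iff]; exact_mod_cast Int.floor_nonneg.2 hv.1
    _ ≤ 2 / q := hv.2

theorem Real.goldenRatio_pow_le_fib (n : ℕ) : goldenRatio ^ n ≤ Nat.fib (n + 2) := by
  have h := goldenRatio_mul_fib_succ_add_fib (n + 1)
  have hfib : (Nat.fib (n + 1) : ℝ) ≤ Nat.fib (n + 2) := by
    exact_mod_cast Nat.fib_mono (by omega)
  have : goldenRatio ^ n * goldenRatio ^ 2 ≤ Nat.fib (n + 2) * goldenRatio ^ 2 := by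
    rw [← pow_add, ← h, goldenRatio_sq]
    nlinarith
  exact le_of_mul_le_mul_right this (by positivity)

theorem tendsto_pow_div_sq_atTop {ρ : ℝ} (hρ : 1 < ρ) :
    Tendsto (fun n : ℕ ↦ ρ ^ n / ((n : ℝ) + 1) ^ 2) atTop atTop := by
  have h := (tendsto_pow_const_div_const_pow_of_one_lt 2 hρ).comp (tendsto_add_atTop_nat 1)
  have hpos : ∀ᶠ n : ℕ in atTop, ((n + 1 : ℕ) : ℝ) ^ 2 / ρ ^ (n + 1) ∈ Set.Ioi 0 :=
    Eventually.of_forall fun n ↦ by simp only [Set.mem_Ioi]; positivity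
  have := ((tendsto_nhdsWithin_iff.2 ⟨h, hpos⟩).inv_tendsto_nhdsGT_zero).const_mul_atTop
    (inv_pos.2 (zero_lt_one.trans hρ))
  refine this.congr fun n ↦ ?_
  simp only [Pi.inv_apply, Function.comp_apply, inv_div, pow_succ]
  push_cast
  field_simp

namespace Irrational

open GenContFract

variable {α : ℝ} (hα : Irrational α)
include hα

theorem not_terminatedAt_of (n : ℕ) : ¬(GenContFract.of α).TerminatedAt n := fun h ↦ by
  obtain ⟨q, hq⟩ := (terminates_iff_rat α).1 ⟨n, h⟩
  exact hα ⟨q, hq.symm⟩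

theorem one_le_dens (n : ℕ) : 1 ≤ (GenContFract.of α).dens n :=
  (by exact_mod_cast Nat.fib_pos.2 n.succ_pos : (1 : ℝ) ≤ Nat.fib (n + 1)).trans
    (succ_nth_fib_le_of_nth_den (Or.inr (hα.not_terminatedAt_of _)))

theorem dens_pos (n : ℕ) : 0 < (GenContFract.of α).dens n :=
  one_pos.trans_le (hα.one_le_dens n)

theorem goldenRatio_pow_le_dens (n : ℕ) :
    Real.goldenRatio ^ n ≤ (GenContFract.of α).dens (n + 1) :=
  (Real.goldenRatio_pow_le_fib n).trans
    (succ_nth_fib_le_of_nth_den (Or.inr (hα.not_terminatedAt_of _)))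

theorem tendsto_dens_atTop : Tendsto (fun n ↦ (GenContFract.of α).dens n) atTop atTop :=
  (tendsto_add_atTop_iff_nat 1).1 <| tendsto_atTop_mono hα.goldenRatio_pow_le_dens <|
    tendsto_pow_atTop_atTop_of_one_lt Real.one_lt_goldenRatio

theorem tendsto_dens_rpow_div_sq_atTop {s : ℝ} (hs : 0 < s) :
    Tendsto (fun n : ℕ ↦ (GenContFract.of α).dens (n + 1) ^ s / ((n : ℝ) + 1) ^ 2)
      atTop atTop := by
  refine tendsto_atTop_mono (fun n ↦ ?_)
    (tendsto_pow_div_sq_atTop (Real.one_lt_rpow Real.one_lt_goldenRatio hs))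
  rw [Real.rpow_pow_comm Real.goldenRatio_pos.le]
  gcongr
  exact hα.goldenRatio_pow_le_dens n

theorem abs_dens_mul_sub_nums_le (n : ℕ) :
    |(GenContFract.of α).dens n * α - (GenContFract.of α).nums n| ≤
      1 / (GenContFract.of α).dens n := by
  have happrox := abs_sub_convs_le (hα.not_terminatedAt_of n)
  have hmono : (GenContFract.of α).dens n ≤ (GenContFract.of α).dens (n + 1) := of_den_mono
  have hpos := hα.dens_pos n
  rw [conv_eq_num_div_den] at happrox
  set a := (GenContFract.of α).nums n
  set b := (GenContFract.of α).dens n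
  set b' := (GenContFract.of α).dens (n + 1)
  calc |b * α - a| = b * |α - a / b| := by
        rw [← abs_of_pos hpos, ← abs_mul, abs_of_pos hpos, mul_sub,
          mul_div_cancel₀ _ hpos.ne']
    _ ≤ b * (1 / (b * b')) := by gcongr
    _ = 1 / b' := by field_simp
    _ ≤ 1 / b := by gcongr

theorem isCoprime_of_nums_dens_eq {n : ℕ} {p q : ℤ} (hp : (GenContFract.of α).nums n = p)
    (hq : (GenContFract.of α).dens n = q) : IsCoprime p q := by
  obtain ⟨p', q', hp', hq'⟩ := exists_int_num_den_eq α (n + 1)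
  have hdet := SimpContFract.determinant (s := SimpContFract.of α) (hα.not_terminatedAt_of n)
  dsimp only [SimpContFract.of] at hdet
  rw [hp, hq, hp', hq'] at hdet
  have hdet' : p * q' - q * p' = (-1) ^ (n + 1) := by exact_mod_cast hdet
  have hsq : ((-1 : ℤ) ^ (n + 1)) ^ 2 = 1 := by rw [← pow_mul, mul_comm, pow_mul]; norm_num
  exact ⟨(-1) ^ (n + 1) * q', -((-1) ^ (n + 1) * p'),
    by linear_combination (-1) ^ (n + 1) * hdet' + hsq⟩

theorem exists_lt_dens_fract_add_mul_le (n : ℕ) (x : ℝ) :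
    ∃ k : ℕ, (k : ℝ) < (GenContFract.of α).dens n ∧
      Int.fract (x + k * α) ≤ 2 / (GenContFract.of α).dens n := by
  obtain ⟨p, q, hp, hq⟩ := exists_int_num_den_eq α n
  have hpq := hα.isCoprime_of_nums_dens_eq hp hq
  have happrox := hα.abs_dens_mul_sub_nums_le n
  have hq₀ := hα.dens_pos n
  rw [hp, hq] at happrox
  rw [hq] at hq₀ ⊢
  lift q to ℕ using (by exact_mod_cast hq₀.le)
  simp only [Int.cast_natCast] at happrox hq₀ ⊢
  obtain ⟨k, hkq, hk⟩ := exists_lt_fract_add_mul_le (by exact_mod_cast hq₀) hpq happrox x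
  exact ⟨k, by exact_mod_cast hkq, hk⟩

end Irrational

theorem ENNReal.ofReal_tsum_le_tsum_ofReal {ι : Type*} {f : ι → ℝ} (hf : ∀ i, 0 ≤ f i) :
    ENNReal.ofReal (∑' i, f i) ≤ ∑' i, ENNReal.ofReal (f i) := by
  by_cases hs : Summable f
  · rw [ENNReal.ofReal_tsum_of_nonneg hf hs]
  · simp [tsum_eq_zero_of_not_summable hs]

theorem limsup_ofReal_eq_top_of_frequently_le {ι : Type*} {l : Filter ι} {f : ι → ℝ}
    (hf : ∀ M : ℝ, ∃ᶠ i in l, M ≤ f i) :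
    limsup (fun i ↦ ENNReal.ofReal (f i)) l = ⊤ :=
  ENNReal.eq_top_of_forall_nnreal_le fun M ↦ le_limsup_of_frequently_le'
    ((hf M).mono fun i hi ↦ by simpa using ENNReal.ofReal_le_ofReal hi)

section Spikes

variable (q : ℕ → ℝ)

noncomputable def spike (n : ℕ) (y : ℝ) : ℝ :=
  ((n + 1 : ℝ))⁻¹ ^ 2 * q (n + 1) *
    Set.indicator (Set.Icc (0 : ℝ) (2 / q (n + 1))) (fun _ => (1 : ℝ)) y

noncomputable def spikeSum (y : ℝ) : ℝ := ∑' n : ℕ, spike q n y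

theorem measurable_spike (n : ℕ) : Measurable (spike q n) :=
  (measurable_const.indicator measurableSet_Icc).const_mul _

variable {q} (hq : ∀ n, 0 < q n)
include hq

theorem spike_nonneg (n : ℕ) (y : ℝ) : 0 ≤ spike q n y :=
  mul_nonneg (mul_nonneg (by positivity) (hq _).le)
    (Set.indicator_nonneg (fun _ _ ↦ zero_le_one) y)

theorem lintegral_ofReal_spike (n : ℕ) :
    ∫⁻ y, ENNReal.ofReal (spike q n y) = ENNReal.ofReal (2 * ((n + 1 : ℝ))⁻¹ ^ 2) := by
  have hind : (fun y ↦ ENNReal.ofReal (spike q n y)) =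
      (Set.Icc (0 : ℝ) (2 / q (n + 1))).indicator
        fun _ ↦ ENNReal.ofReal (((n + 1 : ℝ))⁻¹ ^ 2 * q (n + 1)) := by
    ext y
    by_cases hy : y ∈ Set.Icc (0 : ℝ) (2 / q (n + 1)) <;> simp [spike, hy]
  rw [hind, lintegral_indicator_const measurableSet_Icc, Real.volume_Icc, sub_zero,
    ← ENNReal.ofReal_mul (mul_nonneg (by positivity) (hq _).le)]
  congr 1
  field_simp [(hq (n + 1)).ne']

theorem integrable_spikeSum : Integrable (spikeSum q) := by
  refine ⟨(Measurable.tsum (measurable_spike q)).aestronglyMeasurable, ?_⟩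
  rw [hasFiniteIntegral_iff_ofReal (f := spikeSum q)
    (ae_of_all _ fun y ↦ tsum_nonneg (spike_nonneg hq · y))]
  have hsum : Summable fun n : ℕ ↦ 2 * ((n + 1 : ℝ))⁻¹ ^ 2 := by
    refine ((summable_nat_add_iff 1).2 (Real.summable_nat_pow_inv.2 one_lt_two)).mul_left 2
      |>.congr fun n ↦ ?_
    push_cast
    rw [inv_pow]
  calc ∫⁻ y, ENNReal.ofReal (spikeSum q y)
      ≤ ∫⁻ y, ∑' n, ENNReal.ofReal (spike q n y) :=
        lintegral_mono fun y ↦ ENNReal.ofReal_tsum_le_tsum_ofReal (spike_nonneg hq · y)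
    _ = ∑' n : ℕ, ENNReal.ofReal (2 * ((n + 1 : ℝ))⁻¹ ^ 2) := by
        rw [lintegral_tsum fun n ↦ (measurable_spike q n).ennreal_ofReal.aemeasurable]
        simp_rw [lintegral_ofReal_spike hq]
    _ < ⊤ := hsum.tsum_ofReal_lt_top

theorem le_spikeSum (hq_tendsto : Tendsto q atTop atTop) {y : ℝ} (hy : 0 < y) {n : ℕ}
    (hyn : y ≤ 2 / q (n + 1)) : ((n + 1 : ℝ))⁻¹ ^ 2 * q (n + 1) ≤ spikeSum q y := by
  have hzero : ∀ᶠ m in atTop, spike q m y = 0 :=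
    ((hq_tendsto.comp (tendsto_add_atTop_nat 1)).eventually_gt_atTop (2 / y)).mono fun m hm ↦ by
      have : 2 / q (m + 1) < y := (div_lt_comm₀ (hq _) hy).2 hm
      simp [spike, Set.indicator_of_notMem (fun h : y ∈ Set.Icc _ _ ↦ this.not_ge h.2)]
  obtain ⟨N, hN⟩ := eventually_atTop.1 hzero
  have hsum : Summable (spike q · y) :=
    summable_of_ne_finset_zero (s := Finset.range N) fun m hm ↦ hN m (by simpa using hm)
  calc ((n + 1 : ℝ))⁻¹ ^ 2 * q (n + 1) = spike q n y := by
        simp [spike, Set.indicator_of_mem (show y ∈ Set.Icc _ _ from ⟨hy.le, hyn⟩)]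
    _ ≤ spikeSum q y := hsum.le_tsum n fun m _ ↦ spike_nonneg hq m y

end Spikes

theorem iterate_fract_add_apply (α x : ℝ) (n : ℕ) :
    (fun y ↦ Int.fract (y + α))^[n] (Int.fract x) = Int.fract (x + n * α) := by
  induction n with
  | zero => simp
  | succ n ih =>
    have : Int.fract (x + n * α) + α = x + (n + 1 : ℕ) * α - ⌊x + n * α⌋ := by
      rw [Int.fract]; push_cast; ring
    rw [Function.iterate_succ_apply', ih, this, Int.fract_sub_intCast]

theorem ae_fract_add_nat_mul_ne_zero (α : ℝ) :
    ∀ᵐ x : ℝ, ∀ k : ℕ, Int.fract (x + k * α) ≠ 0 := by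
  refine ae_all_iff.2 fun k ↦ measure_mono_null (fun x hx ↦ ?_)
    ((Set.countable_range fun m : ℤ ↦ (m : ℝ) - k * α).measure_zero volume)
  have hx' : Int.fract (x + k * α) = 0 := not_not.1 hx
  rw [Int.fract, sub_eq_zero] at hx'
  exact ⟨⌊x + k * α⌋, show (⌊x + k * α⌋ : ℝ) - k * α = x by linarith⟩

theorem Irrational.frequently_le_spikeSum_div_rpow {α : ℝ} (hα : Irrational α) {r : ℝ}
    (hr₀ : 0 < r) (hr₁ : r < 1) {x : ℝ} (hx : ∀ k : ℕ, Int.fract (x + k * α) ≠ 0)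
    (M : ℝ) :
    ∃ᶠ k : ℕ in atTop, M ≤ spikeSum (fun n ↦ (GenContFract.of α).dens n)
      (Int.fract (x + k * α)) / (k : ℝ) ^ r := by
  have htend := hα.tendsto_dens_atTop.comp (tendsto_add_atTop_nat 1)
  rw [frequently_atTop]
  intro N
  have hfar : ∀ᶠ n in atTop, ∀ k ∈ Finset.range (N + 1),
      2 / (GenContFract.of α).dens (n + 1) < Int.fract (x + k * α) :=
    (Finset.range (N + 1)).eventually_all.2 fun k _ ↦
      (htend.eventually_gt_atTop (2 / Int.fract (x + k * α))).mono fun n hn ↦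
        (div_lt_comm₀ (hα.dens_pos _) ((Int.fract_nonneg _).lt_of_ne (hx k).symm)).2 hn
  obtain ⟨n, hn, hM⟩ := (hfar.and
    ((hα.tendsto_dens_rpow_div_sq_atTop (sub_pos.2 hr₁)).eventually_ge_atTop M)).exists
  obtain ⟨k, hkq, hk⟩ := hα.exists_lt_dens_fract_add_mul_le (n + 1) x
  have hkN : N + 1 ≤ k := by
    by_contra h
    exact (hn k (Finset.mem_range.2 (by omega))).not_ge hk
  refine ⟨k, by omega, ?_⟩
  have hk₀ : (0 : ℝ) < k := by exact_mod_cast (by omega : 0 < k)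
  set Q := (GenContFract.of α).dens (n + 1)
  calc M ≤ Q ^ (1 - r) / ((n : ℝ) + 1) ^ 2 := hM
    _ = ((n + 1 : ℝ))⁻¹ ^ 2 * Q / Q ^ r := by
        rw [Real.rpow_sub (hα.dens_pos _), Real.rpow_one, inv_pow, inv_mul_eq_div,
          div_right_comm]
    _ ≤ ((n + 1 : ℝ))⁻¹ ^ 2 * Q / (k : ℝ) ^ r := by
        have := hα.dens_pos (n + 1)
        gcongr
    _ ≤ _ := by
        gcongr
        exact le_spikeSum hα.dens_pos hα.tendsto_dens_atTop
          ((Int.fract_nonneg _).lt_of_ne (hx k).symm) hk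

/-- For an irrational `α` with continued fraction denominators `q_n`, the
function `h = ∑_{n≥1} n⁻² q_n 1_{[0,2/q_n]}` is integrable on `[0,1)`, and for the
rotation `θ x = x + α (mod 1)` and every `0 < r < 1`, `limsup_n h(θ^[n] x)/n^r = ∞` a.e. -/
theorem stmt7 (α : ℝ) (hα : Irrational α)
    (q : ℕ → ℝ) (hq : ∀ n, q n = (GenContFract.of α).dens n)
    (θ : ℝ → ℝ) (hθ : θ = fun x => Int.fract (x + α))
    (h : ℝ → ℝ)
    (hh : h = fun x => ∑' n : ℕ,
      ((n + 1 : ℝ))⁻¹ ^ 2 * q (n + 1) *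
        Set.indicator (Set.Icc (0 : ℝ) (2 / q (n + 1))) (fun _ => (1 : ℝ)) x) :
    IntegrableOn h (Set.Ico (0 : ℝ) 1) volume ∧
    ∀ r : ℝ, 0 < r → r < 1 →
      ∀ᵐ x ∂(volume.restrict (Set.Ico (0 : ℝ) 1)),
        Filter.limsup
          (fun n : ℕ => ENNReal.ofReal (h (θ^[n] x) / (n : ℝ) ^ r)) atTop = ⊤ := by
  obtain rfl : q = fun n ↦ (GenContFract.of α).dens n := funext hq
  subst hθ hh
  refine ⟨(integrable_spikeSum hα.dens_pos).integrableOn, fun r hr₀ hr₁ ↦ ?_⟩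
  filter_upwards [ae_restrict_mem measurableSet_Ico,
    ae_restrict_of_ae (ae_fract_add_nat_mul_ne_zero α)] with x hx hx₀
  have horbit (n : ℕ) : (fun y ↦ Int.fract (y + α))^[n] x = Int.fract (x + n * α) := by
    simpa only [Int.fract_eq_self.2 hx] using iterate_fract_add_apply α x n
  simp only [horbit]
  exact limsup_ofReal_eq_top_of_frequently_le
    (hα.frequently_le_spikeSum_div_rpow hr₀ hr₁ hx₀)
end

section
/- Let (X,Σ,μ) be a probability space, T the Koopman operator of a measure preserving transformation, 0<r<1 and ρ>1. Set n_j = ⌊ρ^j⌋. Then for every g ∈ L^r(μ), the series ∑_{j=1}^∞ T^{n_j}|g| / n_j converges a.e., and hence T^{n_j} g / n_j → 0 a.e.; consequently for f = (I-T)g ∈ (I-T)L^r(μ), M_{n_j} f → 0 μ-a.e. -/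
open MeasureTheory Filter Topology ENNReal

/-- Along `n_j = ⌊ρ^j⌋` with `ρ > 1`, for `g ∈ L^r(μ)` (`0 < r < 1`) the
series `∑_j T^{n_j}|g|/n_j` converges a.e., hence `T^{n_j} g / n_j → 0` a.e., and for
the coboundary `f = (I-T)g` the averages `M_{n_j} f → 0` a.e. -/
theorem stmt8 {X : Type*} [MeasurableSpace X] (μ : Measure X) [IsProbabilityMeasure μ]
    (θ : X → X) (hθ : MeasurePreserving θ μ μ) (r : ℝ) (hr0 : 0 < r) (hr1 : r < 1)
    (ρ : ℝ) (hρ : 1 < ρ) (n : ℕ → ℕ) (hn : ∀ j, n j = ⌊ρ ^ j⌋₊)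
    (g : X → ℝ) (hg : Measurable g)
    (hgLr : ∫⁻ x, ENNReal.ofReal (|g x| ^ r) ∂μ < ⊤)
    (f : X → ℝ) (hf : f = fun x => g x - g (θ x)) :
    (∀ᵐ x ∂μ, Summable (fun j : ℕ => |g (θ^[n (j + 1)] x)| / (n (j + 1) : ℝ))) ∧
    (∀ᵐ x ∂μ, Tendsto (fun j : ℕ => g (θ^[n (j + 1)] x) / (n (j + 1) : ℝ))
      atTop (𝓝 0)) ∧
    (∀ᵐ x ∂μ, Tendsto (fun j : ℕ =>
        (1 / (n (j + 1) : ℝ)) * ∑ k ∈ Finset.range (n (j + 1)), f (θ^[k] x))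
      atTop (𝓝 0)) := by
  subst hf
  have hθm := hθ.measurable
  have hρ0 : (0:ℝ) < ρ := lt_trans one_pos hρ
  -- basic facts about n (j+1)
  have hpow1 : ∀ j : ℕ, (1:ℝ) ≤ ρ ^ (j + 1) := fun j => one_le_pow₀ hρ.le
  have hn1 : ∀ j : ℕ, 1 ≤ n (j + 1) := by
    intro j
    rw [hn]
    exact Nat.le_floor (by exact_mod_cast hpow1 j)
  have hnpos : ∀ j : ℕ, (0:ℝ) < (n (j + 1) : ℝ) := by
    intro j; exact_mod_cast hn1 j
  have hnhalf : ∀ j : ℕ, ρ ^ (j + 1) / 2 ≤ (n (j + 1) : ℝ) := by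
    intro j
    rcases le_or_gt (ρ ^ (j + 1)) 2 with h | h
    · calc ρ ^ (j + 1) / 2 ≤ 2 / 2 := by linarith
      _ = 1 := by norm_num
      _ ≤ (n (j + 1) : ℝ) := by exact_mod_cast hn1 j
    · have h2 : ρ ^ (j + 1) - 1 < (⌊ρ ^ (j + 1)⌋₊ : ℝ) := Nat.sub_one_lt_floor _
      rw [hn]
      nlinarith
  -- the a.e. summability
  set A : ℕ → X → ℝ≥0∞ :=
    fun j x => ENNReal.ofReal ((|g (θ^[n (j + 1)] x)| / (n (j + 1) : ℝ)) ^ r) with hA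
  have hmeasA : ∀ j, Measurable (A j) := by
    intro j
    have hit : Measurable (θ^[n (j + 1)]) := hθm.iterate _
    fun_prop
  set I := ∫⁻ x, ENNReal.ofReal (|g x| ^ r) ∂μ with hI
  have hcomp : ∀ m : ℕ, ∫⁻ x, ENNReal.ofReal (|g (θ^[m] x)| ^ r) ∂μ = I := by
    intro m
    exact (hθ.iterate m).lintegral_comp (f := fun y => ENNReal.ofReal (|g y| ^ r)) (by fun_prop)
  set b : ℕ → ℝ := fun j => (2 / ρ ^ (j + 1)) ^ r with hb
  have hbnn : ∀ j, 0 ≤ b j := by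
    intro j
    have := hpow1 j
    positivity
  have key : ∀ j, ∫⁻ x, A j x ∂μ ≤ I * ENNReal.ofReal (b j) := by
    intro j
    have hm0 : (0:ℝ) < (n (j + 1) : ℝ) := hnpos j
    have h1 : ∫⁻ x, A j x ∂μ
        = ∫⁻ x, ENNReal.ofReal (|g (θ^[n (j + 1)] x)| ^ r)
            * ENNReal.ofReal ((1 / (n (j + 1) : ℝ)) ^ r) ∂μ := by
      refine lintegral_congr fun x => ?_
      simp only [hA]
      have : (|g (θ^[n (j + 1)] x)| / (n (j + 1) : ℝ)) ^ r
          = |g (θ^[n (j + 1)] x)| ^ r * (1 / (n (j + 1) : ℝ)) ^ r := by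
        rw [← Real.mul_rpow (abs_nonneg _) (by positivity), mul_one_div]
      rw [this, ENNReal.ofReal_mul (by positivity)]
    have h2 : ∫⁻ x, ENNReal.ofReal (|g (θ^[n (j + 1)] x)| ^ r)
            * ENNReal.ofReal ((1 / (n (j + 1) : ℝ)) ^ r) ∂μ
        = I * ENNReal.ofReal ((1 / (n (j + 1) : ℝ)) ^ r) := by
      rw [lintegral_mul_const _ (by have hit : Measurable (θ^[n (j+1)]) := hθm.iterate _; fun_prop),
        hcomp]
    rw [h1, h2]
    refine mul_le_mul_right (ENNReal.ofReal_le_ofReal ?_) _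
    refine Real.rpow_le_rpow (by positivity) ?_ hr0.le
    rw [div_le_div_iff₀ hm0 (by positivity)]
    have := hnhalf j
    nlinarith
  -- summability of b
  have hq1 : 1 < ρ ^ r := by
    rw [Real.one_lt_rpow_iff_of_pos hρ0]
    exact Or.inl ⟨hρ, hr0⟩
  have hbsum : Summable b := by
    have hcongr : ∀ j : ℕ, b j = (2 ^ r) * ((ρ ^ r)⁻¹) ^ (j + 1) := by
      intro j
      have hpr : ((ρ : ℝ) ^ (j + 1)) ^ r = (ρ ^ r) ^ (j + 1) := by
        rw [← Real.rpow_natCast ρ (j + 1), ← Real.rpow_natCast (ρ ^ r) (j + 1),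
          ← Real.rpow_mul hρ0.le, ← Real.rpow_mul hρ0.le, mul_comm]
      simp only [hb]
      rw [Real.div_rpow (by norm_num) (by positivity), hpr, div_eq_mul_inv, inv_pow]
    have hsg : Summable fun j : ℕ => (2 ^ r) * ((ρ ^ r)⁻¹) ^ j :=
      (summable_geometric_of_lt_one (by positivity) (inv_lt_one_of_one_lt₀ hq1)).mul_left _
    exact (summable_nat_add_iff 1).mpr hsg |>.congr fun j => (hcongr j).symm
  -- finiteness of the integral of the sum
  have htsum_lt : ∑' j : ℕ, ∫⁻ x, A j x ∂μ < ⊤ := by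
    calc ∑' j : ℕ, ∫⁻ x, A j x ∂μ ≤ ∑' j : ℕ, I * ENNReal.ofReal (b j) :=
        ENNReal.tsum_le_tsum key
      _ = I * ∑' j : ℕ, ENNReal.ofReal (b j) := ENNReal.tsum_mul_left
      _ = I * ENNReal.ofReal (∑' j, b j) := by
          rw [ENNReal.ofReal_tsum_of_nonneg hbnn hbsum]
      _ < ⊤ := ENNReal.mul_lt_top hgLr ENNReal.ofReal_lt_top
  have hae : ∀ᵐ x ∂μ, ∑' j : ℕ, A j x < ⊤ := by
    refine ae_lt_top (Measurable.ennreal_tsum hmeasA) ?_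
    rw [lintegral_tsum fun j => (hmeasA j).aemeasurable]
    exact htsum_lt.ne
  -- part 1
  have part1 : ∀ᵐ x ∂μ, Summable fun j : ℕ => |g (θ^[n (j + 1)] x)| / (n (j + 1) : ℝ) := by
    filter_upwards [hae] with x hx
    set u : ℕ → ℝ := fun j => |g (θ^[n (j + 1)] x)| / (n (j + 1) : ℝ) with hu
    have hunn : ∀ j, 0 ≤ u j := fun j => by positivity
    have hsr : Summable fun j => u j ^ r := by
      have := ENNReal.summable_toReal hx.ne
      refine this.congr fun j => ?_
      rw [hA]
      exact ENNReal.toReal_ofReal (Real.rpow_nonneg (hunn j) r)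
    have h0 : Tendsto (fun j => u j ^ r) atTop (𝓝 0) := hsr.tendsto_atTop_zero
    have hev : ∀ᶠ j in atTop, u j ≤ u j ^ r := by
      filter_upwards [h0.eventually_lt_const one_pos] with j hj
      rcases eq_or_lt_of_le (hunn j) with h | h
      · rw [← h]; rw [Real.zero_rpow hr0.ne']
      · have hu1 : u j ≤ 1 := by
          by_contra hcon
          push_neg at hcon
          have : 1 < u j ^ r := by
            rw [Real.one_lt_rpow_iff_of_pos h]; exact Or.inl ⟨hcon, hr0⟩
          linarith
        calc u j = u j ^ (1:ℝ) := (Real.rpow_one _).symm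
          _ ≤ u j ^ r := Real.rpow_le_rpow_of_exponent_ge h hu1 hr1.le
    obtain ⟨N, hN⟩ := eventually_atTop.mp hev
    have hshift : Summable fun j => u (j + N) := by
      refine Summable.of_nonneg_of_le (fun j => hunn _) (fun j => hN _ (Nat.le_add_left N j)) ?_
      exact hsr.comp_injective (add_left_injective N)
    exact (summable_nat_add_iff N).mp hshift
  refine ⟨part1, ?_, ?_⟩
  -- part 2
  · filter_upwards [part1] with x hx
    have h0 : Tendsto (fun j => |g (θ^[n (j + 1)] x)| / (n (j + 1) : ℝ)) atTop (𝓝 0) :=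
      hx.tendsto_atTop_zero
    refine squeeze_zero_norm (fun j => ?_) h0
    rw [Real.norm_eq_abs, abs_div, abs_of_pos (hnpos j)]
  -- part 3
  · have hntop : Tendsto (fun j : ℕ => (n (j + 1) : ℝ)) atTop atTop := by
      have h1 : Tendsto (fun j : ℕ => ρ ^ (j + 1)) atTop atTop :=
        (tendsto_pow_atTop_atTop_of_one_lt hρ).comp (tendsto_add_atTop_nat 1)
      have h2 : Tendsto (fun j : ℕ => n (j + 1)) atTop atTop := by
        simp only [hn]
        exact tendsto_nat_floor_atTop.comp h1
      exact tendsto_natCast_atTop_atTop.comp h2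
    filter_upwards [part1] with x hx
    have h0 : Tendsto (fun j => |g (θ^[n (j + 1)] x)| / (n (j + 1) : ℝ)) atTop (𝓝 0) :=
      hx.tendsto_atTop_zero
    have h2 : Tendsto (fun j => g (θ^[n (j + 1)] x) / (n (j + 1) : ℝ)) atTop (𝓝 0) := by
      refine squeeze_zero_norm (fun j => ?_) h0
      rw [Real.norm_eq_abs, abs_div, abs_of_pos (hnpos j)]
    have h1 : Tendsto (fun j : ℕ => g x / (n (j + 1) : ℝ)) atTop (𝓝 0) :=
      Tendsto.div_atTop tendsto_const_nhds hntop
    have := h1.sub h2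
    rw [sub_zero] at this
    refine this.congr fun j => ?_
    have htel : ∑ k ∈ Finset.range (n (j + 1)), (g (θ^[k] x) - g (θ (θ^[k] x)))
        = g x - g (θ^[n (j + 1)] x) := by
      have : ∀ k : ℕ, g (θ (θ^[k] x)) = g (θ^[k + 1] x) := fun k => by
        rw [Function.iterate_succ_apply']
      calc ∑ k ∈ Finset.range (n (j + 1)), (g (θ^[k] x) - g (θ (θ^[k] x)))
          = ∑ k ∈ Finset.range (n (j + 1)), (g (θ^[k] x) - g (θ^[k + 1] x)) := by
            refine Finset.sum_congr rfl fun k _ => by rw [this k]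
        _ = g (θ^[0] x) - g (θ^[n (j + 1)] x) := Finset.sum_range_sub' _ _
        _ = g x - g (θ^[n (j + 1)] x) := by rw [Function.iterate_zero_apply]
    rw [htel, one_div, inv_mul_eq_div, sub_div]
end

section
/- Let (X,Σ,μ) be a probability space and T the Koopman operator of a measure preserving transformation. Fix 0<r<1. If f ∈ (I-T)L^r(μ), then liminf_n |M_n f| = 0 μ-a.e. -/
open MeasureTheory Filter Topology ENNReal

/-! Telescoping gives `M_n (g - g ∘ θ) = n⁻¹ (g - g ∘ θ^[n])`. Since `r ≤ 1`, the function
`t ↦ t ^ r` is subadditive, and `θ^[n]` preserves `μ`, so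
`∫ |M_n f| ^ r ≤ 2 n^(-r) ∫ |g| ^ r → 0`.
Fatou's lemma then gives `∫ liminf |M_n f| ^ r = 0`, hence `liminf |M_n f| = 0` almost everywhere. -/

theorem birkhoffSum_sub_comp_self {α G : Type*} [AddCommGroup G] (θ : α → α) (g : α → G)
    (n : ℕ) (x : α) : birkhoffSum θ (fun y => g y - g (θ y)) n x = g x - g (θ^[n] x) := by
  simp only [birkhoffSum, ← Function.iterate_succ_apply' θ]
  exact Finset.sum_range_sub' (fun k => g (θ^[k] x)) n

theorem birkhoffAverage_sub_comp_self (R : Type*) {α G : Type*} [DivisionRing R] [AddCommGroup G]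
    [Module R G] (θ : α → α) (g : α → G) (n : ℕ) (x : α) :
    birkhoffAverage R θ (fun y => g y - g (θ y)) n x = (n : R)⁻¹ • (g x - g (θ^[n] x)) := by
  rw [birkhoffAverage, birkhoffSum_sub_comp_self]

theorem enorm_smul_sub_rpow_le {E : Type*} [NormedAddCommGroup E] [NormedSpace ℝ E]
    {r : ℝ} (hr0 : 0 ≤ r) (hr1 : r ≤ 1) (c : ℝ) (a b : E) :
    ‖c • (a - b)‖ₑ ^ r ≤ ‖c‖ₑ ^ r * (‖a‖ₑ ^ r + ‖b‖ₑ ^ r) :=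
  calc ‖c • (a - b)‖ₑ ^ r = ‖c‖ₑ ^ r * ‖a - b‖ₑ ^ r := by
        rw [enorm_smul, ENNReal.mul_rpow_of_nonneg _ _ hr0]
    _ ≤ ‖c‖ₑ ^ r * (‖a‖ₑ + ‖b‖ₑ) ^ r := by gcongr; exact enorm_sub_le
    _ ≤ ‖c‖ₑ ^ r * (‖a‖ₑ ^ r + ‖b‖ₑ ^ r) := by
        gcongr; exact ENNReal.rpow_add_le_add_rpow _ _ hr0 hr1

section Coboundary

variable {X E : Type*} [MeasurableSpace X] {μ : Measure X} {θ : X → X}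
  [NormedAddCommGroup E] [NormedSpace ℝ E] [MeasurableSpace E] [OpensMeasurableSpace E]
  {g : X → E} {r : ℝ}

theorem lintegral_enorm_smul_sub_comp_iterate_rpow_le (hθ : MeasurePreserving θ μ μ)
    (hg : Measurable g) (hr0 : 0 ≤ r) (hr1 : r ≤ 1) (c : ℝ) (n : ℕ) :
    ∫⁻ x, ‖c • (g x - g (θ^[n] x))‖ₑ ^ r ∂μ ≤ ‖c‖ₑ ^ r * (2 * ∫⁻ x, ‖g x‖ₑ ^ r ∂μ) := by
  have hgr : Measurable fun x => ‖g x‖ₑ ^ r := hg.enorm.pow_const r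
  have hgrn : Measurable fun x => ‖g x‖ₑ ^ r + ‖g (θ^[n] x)‖ₑ ^ r :=
    hgr.add (hgr.comp (hθ.measurable.iterate n))
  calc ∫⁻ x, ‖c • (g x - g (θ^[n] x))‖ₑ ^ r ∂μ
      ≤ ∫⁻ x, ‖c‖ₑ ^ r * (‖g x‖ₑ ^ r + ‖g (θ^[n] x)‖ₑ ^ r) ∂μ :=
        lintegral_mono fun x => enorm_smul_sub_rpow_le hr0 hr1 c _ _
    _ = ‖c‖ₑ ^ r * (2 * ∫⁻ x, ‖g x‖ₑ ^ r ∂μ) := by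
        rw [lintegral_const_mul _ hgrn,
          lintegral_add_left hgr, (hθ.iterate n).lintegral_comp hgr, two_mul]

theorem tendsto_lintegral_enorm_rpow_birkhoffAverage_sub_comp (hθ : MeasurePreserving θ μ μ)
    (hg : Measurable g) (hr0 : 0 < r) (hr1 : r ≤ 1) (hgr : ∫⁻ x, ‖g x‖ₑ ^ r ∂μ ≠ ∞) :
    Tendsto (fun n => ∫⁻ x, ‖birkhoffAverage ℝ θ (fun y => g y - g (θ y)) n x‖ₑ ^ r ∂μ)
      atTop (𝓝 0) := by
  simp_rw [birkhoffAverage_sub_comp_self]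
  have hinv : Tendsto (fun n : ℕ => ‖(n : ℝ)⁻¹‖ₑ) atTop (𝓝 0) := by
    simpa using (tendsto_inv_atTop_nhds_zero_nat (𝕜 := ℝ)).enorm
  have hc : Tendsto (fun n : ℕ => ‖(n : ℝ)⁻¹‖ₑ ^ r) atTop (𝓝 0) := by
    simpa [Function.comp_def, ENNReal.zero_rpow_of_pos hr0] using
      ((ENNReal.continuous_rpow_const (y := r)).tendsto 0).comp hinv
  have hbound :
      Tendsto (fun n : ℕ => ‖(n : ℝ)⁻¹‖ₑ ^ r * (2 * ∫⁻ x, ‖g x‖ₑ ^ r ∂μ)) atTop (𝓝 0) := by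
    simpa using ENNReal.Tendsto.mul_const hc (Or.inr (ENNReal.mul_ne_top ofNat_ne_top hgr))
  exact tendsto_of_tendsto_of_tendsto_of_le_of_le tendsto_const_nhds hbound (fun _ => zero_le)
    fun n => lintegral_enorm_smul_sub_comp_iterate_rpow_le hθ hg hr0.le hr1 _ n

end Coboundary

theorem ae_liminf_eq_zero_of_tendsto_lintegral {α : Type*} [MeasurableSpace α] {μ : Measure α}
    {F : ℕ → α → ℝ≥0∞} (hF : ∀ n, Measurable (F n))
    (h : Tendsto (fun n => ∫⁻ x, F n x ∂μ) atTop (𝓝 0)) :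
    ∀ᵐ x ∂μ, liminf (fun n => F n x) atTop = 0 := by
  have hFatou : ∫⁻ x, liminf (fun n => F n x) atTop ∂μ = 0 :=
    nonpos_iff_eq_zero.1 <| (lintegral_liminf_le hF).trans h.liminf_eq.le
  exact (lintegral_eq_zero_iff (.liminf hF)).1 hFatou

theorem Real.liminf_abs_eq_zero_of_liminf_enorm_rpow {ι : Type*} {l : Filter ι} [l.NeBot]
    {r : ℝ} (hr : 0 < r) {u : ι → ℝ} (h : liminf (fun i => ‖u i‖ₑ ^ r) l = 0) :
    liminf (fun i => |u i|) l = 0 := by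
  have henorm : liminf (fun i => ‖u i‖ₑ) l = 0 := by
    rw [← Function.comp_def (· ^ r),
      ← (ENNReal.monotone_rpow_of_nonneg hr.le).map_liminf_of_continuousAt _
        ENNReal.continuous_rpow_const.continuousAt] at h
    exact (ENNReal.rpow_eq_zero_iff_of_pos hr).1 h
  have hfreq : ∀ ε > 0, ∃ᶠ i in l, |u i| ≤ ε := fun ε hε =>
    (frequently_lt_of_liminf_lt (by isBoundedDefault) (henorm ▸ ENNReal.ofReal_pos.2 hε)).mono
      fun i hi => by
        rw [Real.enorm_eq_ofReal_abs, ENNReal.ofReal_lt_ofReal_iff hε] at hi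
        exact hi.le
  have hbdd : IsBoundedUnder (· ≥ ·) l fun i => |u i| :=
    isBoundedUnder_of ⟨0, fun i => abs_nonneg _⟩
  refine le_antisymm (le_of_forall_pos_le_add fun ε hε => ?_) <|
    le_liminf_of_le (.of_frequently_le (hfreq 1 one_pos)) (.of_forall fun i => abs_nonneg _)
  simpa using liminf_le_of_frequently_le (hfreq ε hε) hbdd

theorem stmt9_general {X : Type*} [MeasurableSpace X] (μ : Measure X)
    (θ : X → X) (hθ : MeasurePreserving θ μ μ) (r : ℝ) (hr0 : 0 < r) (hr1 : r < 1)
    (g : X → ℝ) (hg : Measurable g)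
    (hgLr : ∫⁻ x, ENNReal.ofReal (|g x| ^ r) ∂μ < ⊤)
    (f : X → ℝ) (hf : f = fun x => g x - g (θ x)) :
    ∀ᵐ x ∂μ, Filter.liminf
      (fun n : ℕ => |(1 / (n : ℝ)) * ∑ k ∈ Finset.range n, f (θ^[k] x)|) atTop = 0 := by
  have hgr : ∫⁻ x, ‖g x‖ₑ ^ r ∂μ ≠ ∞ := by
    simpa only [Real.enorm_eq_ofReal_abs, ENNReal.ofReal_rpow_of_nonneg (abs_nonneg _) hr0.le]
      using hgLr.ne
  subst hf
  have hmeas (n : ℕ) :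
      Measurable fun x => ‖birkhoffAverage ℝ θ (fun y => g y - g (θ y)) n x‖ₑ ^ r := by
    have := hθ.measurable.iterate n
    simp_rw [birkhoffAverage_sub_comp_self]
    fun_prop
  filter_upwards [ae_liminf_eq_zero_of_tendsto_lintegral hmeas
    (tendsto_lintegral_enorm_rpow_birkhoffAverage_sub_comp hθ hg hr0 hr1.le hgr)] with x hx
  simpa [birkhoffAverage, birkhoffSum] using Real.liminf_abs_eq_zero_of_liminf_enorm_rpow hr0 hx

/-- If `f = (I-T)g` is a coboundary with `g ∈ L^r(μ)`, `0 < r < 1`, then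
`liminf_n |M_n f| = 0` a.e. -/
theorem stmt9 {X : Type*} [MeasurableSpace X] (μ : Measure X) [IsProbabilityMeasure μ]
    (θ : X → X) (hθ : MeasurePreserving θ μ μ) (r : ℝ) (hr0 : 0 < r) (hr1 : r < 1)
    (g : X → ℝ) (hg : Measurable g)
    (hgLr : ∫⁻ x, ENNReal.ofReal (|g x| ^ r) ∂μ < ⊤)
    (f : X → ℝ) (hf : f = fun x => g x - g (θ x)) :
    ∀ᵐ x ∂μ, Filter.liminf
      (fun n : ℕ => |(1 / (n : ℝ)) * ∑ k ∈ Finset.range n, f (θ^[k] x)|) atTop = 0 :=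
  stmt9_general μ θ hθ r hr0 hr1 g hg hgLr f hf
end

section
/- Let (X,Σ,μ) be a Lebesgue probability space with an ergodic aperiodic measure preserving transformation θ, Tf = f∘θ, and let (b_n) be a sequence tending to infinity with b_n/n decreasing to 0. Then there exists 0 ≤ h ∈ L¹(μ) such that limsup_n b_n·T^n h/n = ∞ μ-a.e. -/
/-!
Aperiodicity and Poincaré recurrence make `μ` atomless, so there are sets `A` with
`0 < μ A ≤ 1/N`, and by ergodicity a.e. orbit visits `A` infinitely often. The points whose
first visit to `A` happens at a time divisible by `N` form a set that a.e. orbit enters in every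
window of `N` consecutive times; the measures of the first-visit levels decrease, so the levels
at positive multiples of `N` carry at most `1/N` of the mass and this set has measure `≤ 2/N`.
Choose `N k > k` with `∑ (k + 1) / b (2 N k) < ∞`, let `S k` be such a set for `N k`, and put
`h = ∑ c k 1_{S k}` with `c k = (k + 1) 2 N k / b (2 N k)`, so that `∫ h ≤ ∑ 2 c k / N k < ∞`.
For a.e. `x` and every `k` some `n ∈ [N k, 2 N k)` has `θ^[n] x ∈ S k`, and then
`b n / n ≥ b (2 N k) / (2 N k)` gives `b n h(θ^[n] x) / n ≥ k + 1`.
-/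

open MeasureTheory Filter Topology ENNReal Set

theorem Antitone.mul_tsum_succ_mul_le_tsum {a : ℕ → ℝ≥0∞} (ha : Antitone a) (N : ℕ) :
    N * ∑' q, a ((q + 1) * N) ≤ ∑' j, a j := by
  rcases eq_or_ne N 0 with rfl | hN
  · simp
  have : NeZero N := ⟨hN⟩
  calc (N : ℝ≥0∞) * ∑' q, a ((q + 1) * N) = ∑' q, ∑ _r : Fin N, a ((q + 1) * N) := by
        simp [ENNReal.tsum_mul_left]
    _ ≤ ∑' q, ∑ r : Fin N, a (q * N + r) := by
        gcongr with q r
        exact ha (by linarith [r.is_lt])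
    _ = ∑' p : ℕ × Fin N, a (p.1 * N + p.2) := by simp [ENNReal.tsum_prod', tsum_fintype]
    _ = ∑' j, a j := (Nat.divModEquiv N).symm.tsum_eq a

theorem ENNReal.limsup_eq_top_of_forall_exists_ge {u : ℕ → ℝ≥0∞}
    (h : ∀ k : ℕ, ∃ n ≥ k, (k : ℝ≥0∞) ≤ u n) : limsup u atTop = ⊤ := by
  refine eq_top_of_forall_nnreal_le fun r => ?_
  obtain ⟨j, hj⟩ := exists_nat_gt r
  refine le_limsup_of_frequently_le' (frequently_atTop.2 fun a => ?_)
  obtain ⟨n, hn, hun⟩ := h (max a j)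
  refine ⟨n, le_of_max_le_left hn, le_trans ?_ hun⟩
  exact_mod_cast hj.le.trans (Nat.cast_le.2 (le_max_right a j))

theorem le_mul_div_of_div_le_div {bn bm n m K y : ℝ} (hm : 0 < m) (hbm : 0 < bm) (hK : 0 ≤ K)
    (hdiv : bm / m ≤ bn / n) (hy : K * m / bm ≤ y) : K ≤ bn * y / n :=
  calc K = bm / m * (K * m / bm) := by field_simp
    _ ≤ bn / n * y := mul_le_mul hdiv hy (by positivity) ((div_pos hbm hm).le.trans hdiv)
    _ = bn * y / n := by ring

theorem Filter.Tendsto.exists_forall_lt_summable_div {b : ℕ → ℝ} (hb : Tendsto b atTop atTop)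
    (u : ℕ → ℝ) : ∃ N : ℕ → ℕ, (∀ k, k < N k) ∧ (∀ k, 0 < b (2 * N k)) ∧
      Summable fun k => u k / b (2 * N k) := by
  have hscale (k : ℕ) : ∃ N : ℕ, k < N ∧ (|u k| + 1) * 2 ^ k ≤ b (2 * N) := by
    obtain ⟨M, hM⟩ := eventually_atTop.1 (hb.eventually_ge_atTop ((|u k| + 1) * 2 ^ k))
    exact ⟨M + k + 1, by omega, hM _ (by omega)⟩
  choose N hkN hbN using hscale
  have hbpos (k : ℕ) : 0 < b (2 * N k) := lt_of_lt_of_le (by positivity) (hbN k)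
  refine ⟨N, hkN, hbpos, summable_geometric_two.of_norm_bounded fun k => ?_⟩
  calc ‖u k / b (2 * N k)‖ = |u k| / b (2 * N k) := by
        rw [norm_div, Real.norm_eq_abs, Real.norm_eq_abs, abs_of_pos (hbpos k)]
    _ ≤ (|u k| + 1) / ((|u k| + 1) * 2 ^ k) := by
        gcongr
        exacts [le_add_of_nonneg_right zero_le_one, hbN k]
    _ = (1 / 2) ^ k := by rw [one_div, inv_pow]; field_simp

theorem Real.exists_measurableSet_measure_pos_le (ν : Measure ℝ) [IsFiniteMeasureOnCompacts ν]
    [NullSingletonClass ν] (hν : ν ≠ 0) {ε : ℝ≥0∞} (hε : 0 < ε) :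
    ∃ s, MeasurableSet s ∧ 0 < ν s ∧ ν s ≤ ε := by
  obtain ⟨x, hx⟩ := ν.nonempty_support hν
  obtain ⟨δ, hδε, hδ⟩ := (((tendsto_measure_Icc ν x).mono_left nhdsWithin_le_nhds).eventually
    (eventually_le_nhds hε)).and (self_mem_nhdsWithin (s := Ioi (0 : ℝ))) |>.exists
  exact ⟨Icc (x - δ) (x + δ), measurableSet_Icc,
    (Measure.mem_support_iff_forall x).1 hx _ (Icc_mem_nhds (by linarith) (by linarith)), hδε⟩

namespace MeasureTheory

section Hitting

variable {X : Type*} {θ : X → X} {A : Set X}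

def firstHitLevel (θ : X → X) (A : Set X) (j : ℕ) : Set X :=
  {x | θ^[j] x ∈ A ∧ ∀ i < j, θ^[i] x ∉ A}

def hitTower (θ : X → X) (A : Set X) (N : ℕ) : Set X :=
  ⋃ q, firstHitLevel θ A (q * N)

theorem pairwise_disjoint_firstHitLevel :
    Pairwise (Function.onFun Disjoint (firstHitLevel θ A)) := by
  intro i j hij
  rcases lt_or_gt_of_ne hij with h | h
  · exact disjoint_left.2 fun x hi hj => hj.2 i h hi.1
  · exact disjoint_left.2 fun x hi hj => hi.2 j h hj.1

theorem firstHitLevel_succ_subset (j : ℕ) :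
    firstHitLevel θ A (j + 1) ⊆ θ ⁻¹' firstHitLevel θ A j := fun x hx =>
  ⟨by simpa only [Function.iterate_succ_apply] using hx.1,
    fun i hi => by simpa only [Function.iterate_succ_apply] using hx.2 (i + 1) (by omega)⟩

theorem exists_lt_iterate_mem_hitTower {N : ℕ} (hN : 0 < N) {y : X} (hy : ∃ n, θ^[n] y ∈ A) :
    ∃ r < N, θ^[r] y ∈ hitTower θ A N := by
  classical
  set τ := Nat.find hy
  refine ⟨τ % N, Nat.mod_lt τ hN, mem_iUnion.2 ⟨τ / N, ?_, fun i hi => ?_⟩⟩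
  · rw [← Function.iterate_add_apply, Nat.div_add_mod']
    exact Nat.find_spec hy
  · rw [← Function.iterate_add_apply]
    exact Nat.find_min hy (by have := Nat.div_add_mod' τ N; omega)

variable [MeasurableSpace X] {μ : Measure X}

theorem measurableSet_firstHitLevel (hθ : Measurable θ) (hA : MeasurableSet A) (j : ℕ) :
    MeasurableSet (firstHitLevel θ A j) := by
  have : firstHitLevel θ A j = θ^[j] ⁻¹' A \ ⋃ i < j, θ^[i] ⁻¹' A := by ext; simp [firstHitLevel]
  exact this ▸ (hθ.iterate j hA).diff (.iUnion fun i => .iUnion fun _ => hθ.iterate i hA)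

theorem measurableSet_hitTower (hθ : Measurable θ) (hA : MeasurableSet A) (N : ℕ) :
    MeasurableSet (hitTower θ A N) :=
  .iUnion fun _ => measurableSet_firstHitLevel hθ hA _

theorem antitone_measure_firstHitLevel (hθ : MeasurePreserving θ μ μ) (hA : MeasurableSet A) :
    Antitone fun j => μ (firstHitLevel θ A j) :=
  antitone_nat_of_succ_le fun j => (measure_mono (firstHitLevel_succ_subset j)).trans_eq <|
    hθ.measure_preimage (measurableSet_firstHitLevel hθ.measurable hA j).nullMeasurableSet

theorem measure_hitTower_le (hθ : MeasurePreserving θ μ μ) (hA : MeasurableSet A) (N : ℕ) :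
    μ (hitTower θ A N) ≤ μ A + μ univ / N := by
  rcases eq_or_ne N 0 with rfl | hN
  · exact (measure_mono fun x hx => by simpa [hitTower, firstHitLevel] using hx).trans le_self_add
  have hsparse : ∑' q, μ (firstHitLevel θ A ((q + 1) * N)) ≤ μ univ / N := by
    rw [ENNReal.le_div_iff_mul_le (.inl (Nat.cast_ne_zero.2 hN)) (.inl (natCast_ne_top N)),
      mul_comm]
    refine ((antitone_measure_firstHitLevel hθ hA).mul_tsum_succ_mul_le_tsum N).trans ?_
    rw [← measure_iUnion pairwise_disjoint_firstHitLevel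
      (measurableSet_firstHitLevel hθ.measurable hA)]
    exact measure_mono (subset_univ _)
  calc μ (hitTower θ A N) ≤ ∑' q, μ (firstHitLevel θ A (q * N)) := measure_iUnion_le _
    _ = μ (firstHitLevel θ A 0) + ∑' q, μ (firstHitLevel θ A ((q + 1) * N)) := by
        rw [tsum_eq_zero_add' ENNReal.summable, zero_mul]
    _ ≤ μ A + μ univ / N := add_le_add (measure_mono fun x hx => hx.1) hsparse

end Hitting

variable {X : Type*} [MeasurableSpace X] {μ : Measure X}

theorem MeasurePreserving.nullSingletonClass_of_aperiodic
    [MeasurableSingletonClass X] [IsFiniteMeasure μ] {θ : X → X}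
    (hθ : MeasurePreserving θ μ μ) (haper : μ {x | ∃ n : ℕ, 0 < n ∧ θ^[n] x = x} = 0) :
    NullSingletonClass μ := by
  refine ⟨fun x => by_contra fun hx => ?_⟩
  obtain ⟨y, rfl : y = x, m, hm, hmx⟩ :=
    hθ.conservative.exists_mem_iterate_mem (measurableSet_singleton x).nullMeasurableSet hx
  exact hx <| measure_mono_null
    (singleton_subset_iff.2 (show ∃ n, 0 < n ∧ θ^[n] y = y from ⟨m, Nat.pos_of_ne_zero hm, hmx⟩))
    haper

theorem exists_measurableSet_measure_pos_le [StandardBorelSpace X] [IsFiniteMeasure μ]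
    [NullSingletonClass μ] (hμ : μ ≠ 0) {ε : ℝ≥0∞} (hε : 0 < ε) :
    ∃ s, MeasurableSet s ∧ 0 < μ s ∧ μ s ≤ ε := by
  have hf := measurableEmbedding_embeddingReal X
  have : NullSingletonClass (μ.map (embeddingReal X)) := ⟨fun t => by
    rw [hf.map_apply]
    exact (subsingleton_singleton.preimage hf.injective).measure_zero μ⟩
  obtain ⟨s, hs, hpos, hle⟩ := Real.exists_measurableSet_measure_pos_le (μ.map (embeddingReal X))
    (by simpa [Measure.map_eq_zero_iff hf.measurable.aemeasurable] using hμ) hε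
  rw [hf.map_apply] at hpos hle
  exact ⟨_, hf.measurable hs, hpos, hle⟩

theorem _root_.Ergodic.ae_frequently_iterate_mem [IsFiniteMeasure μ] {θ : X → X} {s : Set X}
    (herg : Ergodic θ μ) (hs : MeasurableSet s) (hs₀ : μ s ≠ 0) :
    ∀ᵐ x ∂μ, ∃ᶠ n in atTop, θ^[n] x ∈ s := by
  set G := ⋃ n : ℕ, θ^[n] ⁻¹' s
  have hG : MeasurableSet G := .iUnion fun n => herg.measurable.iterate n hs
  have hGinv : θ ⁻¹' G ⊆ G := fun x ⟨_, ⟨n, rfl⟩, hx⟩ =>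
    mem_iUnion.2 ⟨n + 1, by rwa [mem_preimage, Function.iterate_succ_apply]⟩
  have hGae : ∀ᵐ x ∂μ, x ∈ G := by
    refine (herg.ae_empty_or_univ_of_preimage_ae_le hG.nullMeasurableSet
      hGinv.eventuallyLE).resolve_left (fun h => hs₀ ?_) |> ae_eq_univ.1
    exact measure_mono_null (subset_iUnion_of_subset 0 fun _ hx => hx) (ae_eq_empty.1 h)
  filter_upwards [hGae, herg.toMeasurePreserving.conservative
    |>.ae_forall_image_mem_imp_frequently_image_mem hs.nullMeasurableSet] with x hxG hx
  obtain ⟨k, hk⟩ := mem_iUnion.1 hxG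
  exact hx k hk

theorem exists_integrable_ae_ge_of_tsum_ne_top {ι : Type*} [Countable ι] {S : ι → Set X}
    (hS : ∀ i, MeasurableSet (S i)) {c : ι → ℝ}
    (hsum : ∑' i, ENNReal.ofReal (c i) * μ (S i) ≠ ⊤) :
    ∃ h : X → ℝ, Measurable h ∧ (∀ x, 0 ≤ h x) ∧ Integrable h μ ∧
      ∀ᵐ x ∂μ, ∀ i, x ∈ S i → c i ≤ h x := by
  set H : X → ℝ≥0∞ := fun x => ∑' i, (S i).indicator (fun _ => ENNReal.ofReal (c i)) x
  have hH : Measurable H := .tsum fun i => measurable_const.indicator (hS i)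
  have hHint : ∫⁻ x, H x ∂μ ≠ ⊤ := by
    rwa [lintegral_tsum fun i => (measurable_const.indicator (hS i)).aemeasurable,
      tsum_congr fun i => lintegral_indicator_const (hS i) _]
  refine ⟨fun x => (H x).toReal, hH.ennreal_toReal, fun _ => toReal_nonneg,
    integrable_toReal_of_lintegral_ne_top hH.aemeasurable hHint, ?_⟩
  filter_upwards [ae_lt_top hH hHint] with x hx i hxi
  refine (ENNReal.ofReal_le_iff_le_toReal hx.ne).1 ?_
  simpa [indicator_of_mem hxi] using ENNReal.le_tsum (f := fun i => (S i).indicator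
    (fun _ => ENNReal.ofReal (c i)) x) i

variable [StandardBorelSpace X] [IsProbabilityMeasure μ] [NullSingletonClass μ]

theorem _root_.Ergodic.exists_measure_le_ae_forall_exists_iterate_mem {θ : X → X}
    (herg : Ergodic θ μ) {N : ℕ} (hN : 0 < N) :
    ∃ S, MeasurableSet S ∧ μ S ≤ 2 / N ∧ ∀ᵐ x ∂μ, ∀ t, ∃ r < N, θ^[t + r] x ∈ S := by
  obtain ⟨A, hA, hA₀, hAN⟩ := exists_measurableSet_measure_pos_le (NeZero.ne μ)
    (ENNReal.inv_pos.2 (natCast_ne_top N))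
  refine ⟨hitTower θ A N, measurableSet_hitTower herg.measurable hA N, ?_, ?_⟩
  · calc μ (hitTower θ A N) ≤ μ A + μ univ / N :=
          measure_hitTower_le herg.toMeasurePreserving hA N
      _ ≤ (N : ℝ≥0∞)⁻¹ + (N : ℝ≥0∞)⁻¹ := by rw [measure_univ, one_div]; gcongr
      _ = 2 / N := by rw [← two_mul, div_eq_mul_inv]
  · filter_upwards [herg.ae_frequently_iterate_mem hA hA₀.ne'] with x hx t
    obtain ⟨n, htn, hn⟩ := frequently_atTop.1 hx t
    obtain ⟨r, hr, hrS⟩ := exists_lt_iterate_mem_hitTower hN (y := θ^[t] x)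
      ⟨n - t, by rwa [← Function.iterate_add_apply, Nat.sub_add_cancel htn]⟩
    exact ⟨r, hr, by rwa [add_comm, Function.iterate_add_apply]⟩

theorem _root_.Ergodic.exists_integrable_ae_forall_exists_le_iterate {θ : X → X}
    (herg : Ergodic θ μ) {N : ℕ → ℕ} (hN : ∀ k, 0 < N k) {c : ℕ → ℝ} (hc : 0 ≤ c)
    (hsum : Summable fun k => c k / N k) :
    ∃ h : X → ℝ, Measurable h ∧ (∀ x, 0 ≤ h x) ∧ Integrable h μ ∧
      ∀ᵐ x ∂μ, ∀ k, ∃ r < N k, c k ≤ h (θ^[N k + r] x) := by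
  choose S hSm hSμ hS using fun k => herg.exists_measure_le_ae_forall_exists_iterate_mem (hN k)
  have hterm (k : ℕ) : ENNReal.ofReal (c k) * μ (S k) ≤ ENNReal.ofReal (2 * (c k / N k)) :=
    calc ENNReal.ofReal (c k) * μ (S k) ≤ ENNReal.ofReal (c k) * ENNReal.ofReal (2 / N k) := by
          rw [ENNReal.ofReal_div_of_pos (Nat.cast_pos.2 (hN k)), ENNReal.ofReal_natCast,
            ENNReal.ofReal_ofNat]
          exact mul_le_mul_right (hSμ k) _
      _ = ENNReal.ofReal (2 * (c k / N k)) := by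
          rw [← ENNReal.ofReal_mul (hc k)]
          ring_nf
  have hfin : ∑' k, ENNReal.ofReal (c k) * μ (S k) ≠ ⊤ := by
    refine ne_top_of_le_ne_top ?_ (ENNReal.tsum_le_tsum hterm)
    rw [← ENNReal.ofReal_tsum_of_nonneg
      (fun k => mul_nonneg zero_le_two (div_nonneg (hc k) (N k).cast_nonneg)) (hsum.mul_left 2)]
    exact ofReal_ne_top
  obtain ⟨h, hm, h0, hint, hge⟩ := exists_integrable_ae_ge_of_tsum_ne_top hSm hfin
  refine ⟨h, hm, h0, hint, ?_⟩
  filter_upwards [ae_all_iff.2 fun n => (herg.iterate n).quasiMeasurePreserving.ae hge,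
    ae_all_iff.2 hS] with x hxge hxS k
  obtain ⟨r, hr, hrS⟩ := hxS k (N k)
  exact ⟨r, hr, hxge _ k hrS⟩

end MeasureTheory

theorem stmt18_general {X : Type*} [MeasurableSpace X] [StandardBorelSpace X]
    (μ : Measure X) [IsProbabilityMeasure μ]
    (θ : X → X) (herg : Ergodic θ μ)
    (haper : μ {x | ∃ n : ℕ, 0 < n ∧ θ^[n] x = x} = 0)
    (b : ℕ → ℝ) (hb : Tendsto b atTop atTop)
    (hmono : ∀ n m : ℕ, 1 ≤ n → n ≤ m → b m / m ≤ b n / n) :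
    ∃ h : X → ℝ, Measurable h ∧ (∀ x, 0 ≤ h x) ∧ Integrable h μ ∧
      ∀ᵐ x ∂μ, Filter.limsup
        (fun n : ℕ => ENNReal.ofReal (b n * h (θ^[n] x) / n)) atTop = ⊤ := by
  have := herg.toMeasurePreserving.nullSingletonClass_of_aperiodic haper
  obtain ⟨N, hkN, hbpos, hsum⟩ := hb.exists_forall_lt_summable_div fun k => 2 * (k + 1)
  have hN₀ (k : ℕ) : 0 < N k := (Nat.zero_le k).trans_lt (hkN k)
  obtain ⟨h, hm, h0, hint, hge⟩ := herg.exists_integrable_ae_forall_exists_le_iterate hN₀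
    (c := fun k => (k + 1) * (2 * N k : ℕ) / b (2 * N k))
    (fun k => by have := hbpos k; positivity) <| hsum.congr fun k => by
      have := (hN₀ k).ne'
      push_cast; field_simp
  refine ⟨h, hm, h0, hint, ?_⟩
  filter_upwards [hge] with x hx
  refine ENNReal.limsup_eq_top_of_forall_exists_ge fun k => ?_
  obtain ⟨r, hr, hc⟩ := hx k
  refine ⟨N k + r, by have := hkN k; omega, ?_⟩
  rw [← ENNReal.ofReal_natCast]
  exact ENNReal.ofReal_le_ofReal <| (le_add_of_nonneg_right zero_le_one).trans <|
    le_mul_div_of_div_le_div (by have := hN₀ k; positivity) (hbpos k) (by positivity)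
      (hmono _ _ (by have := hN₀ k; omega) (by omega)) hc

/-- For an ergodic aperiodic measure preserving transformation on a
Lebesgue probability space and a sequence `b_n → ∞` with `b_n/n` decreasing to `0`,
there is `0 ≤ h ∈ L¹(μ)` with `limsup_n b_n · T^n h / n = ∞` a.e. -/
theorem stmt18 {X : Type*} [MeasurableSpace X] [StandardBorelSpace X]
    (μ : Measure X) [IsProbabilityMeasure μ]
    (θ : X → X) (hθ : MeasurePreserving θ μ μ) (herg : Ergodic θ μ)
    (haper : μ {x | ∃ n : ℕ, 0 < n ∧ θ^[n] x = x} = 0)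
    (b : ℕ → ℝ) (hb : Tendsto b atTop atTop)
    (hmono : ∀ n m : ℕ, 1 ≤ n → n ≤ m → b m / m ≤ b n / n)
    (hb0 : Tendsto (fun n : ℕ => b n / n) atTop (𝓝 0)) :
    ∃ h : X → ℝ, Measurable h ∧ (∀ x, 0 ≤ h x) ∧ Integrable h μ ∧
      ∀ᵐ x ∂μ, Filter.limsup
        (fun n : ℕ => ENNReal.ofReal (b n * h (θ^[n] x) / n)) atTop = ⊤ :=
  stmt18_general μ θ herg haper b hb hmono
end
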